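/- arXiv:1902.02431 — 4 statements merged into one kernel-verified Lean document; each statement's English description precedes it below -/
import Mathlib

section
/- Let A and U be jointly distributed random variables taking values in finite sets, with U uniformly distributed on {−1,+1}. Then (1/2)·I2(A;U) ≤ I_KL(U;A) ≤ I2(A;U), where I_KL is the mutual information in bits. -/
open Finset
open scoped Classical

noncomputable section

/-- Probability of an event under the probability mass function `p` on `Ω`. -/
def pr {Ω : Type*} [Fintype Ω] (p : Ω → ℝ) (E : Ω → Prop) : ℝ :=
  ∑ ω ∈ Finset.univ.filter (fun ω => E ω), p ω

/-- Expectation of `f` under `p`. -/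
def expec {Ω : Type*} [Fintype Ω] (p : Ω → ℝ) (f : Ω → ℝ) : ℝ :=
  ∑ ω, p ω * f ω

/-- The conditional expectation `E[U | A]`, as a random variable on `Ω`. -/
def condExp {Ω α : Type*} [Fintype Ω] (p : Ω → ℝ) (A : Ω → α) (U : Ω → ℝ) : Ω → ℝ :=
  fun ω => expec p (fun ω' => if A ω' = A ω then U ω' else 0) / pr p (fun ω' => A ω' = A ω)

/-- The variance of `f` under `p`. -/
def var {Ω : Type*} [Fintype Ω] (p : Ω → ℝ) (f : Ω → ℝ) : ℝ :=
  expec p (fun ω => (f ω - expec p f)^2)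

/-- The chi-squared mutual information `I2(A;B)`. -/
def I2 {Ω α β : Type*} [Fintype Ω] (p : Ω → ℝ) (A : Ω → α) (B : Ω → β) : ℝ :=
  ∑ a ∈ Finset.univ.image A, ∑ b ∈ Finset.univ.image B,
    if 0 < pr p (fun ω => A ω = a) * pr p (fun ω => B ω = b) then
      (pr p (fun ω => A ω = a ∧ B ω = b) - pr p (fun ω => A ω = a) * pr p (fun ω => B ω = b))^2
        / (pr p (fun ω => A ω = a) * pr p (fun ω => B ω = b))
    else 0

/-- The mutual information `I_KL(A;B)` in bits. -/
def IKL {Ω α β : Type*} [Fintype Ω] (p : Ω → ℝ) (A : Ω → α) (B : Ω → β) : ℝ :=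
  ∑ a ∈ Finset.univ.image A, ∑ b ∈ Finset.univ.image B,
    if 0 < pr p (fun ω => A ω = a ∧ B ω = b) then
      pr p (fun ω => A ω = a ∧ B ω = b) *
        Real.logb 2 (pr p (fun ω => A ω = a ∧ B ω = b) /
          (pr p (fun ω => A ω = a) * pr p (fun ω => B ω = b)))
    else 0

noncomputable section

def gg (x : ℝ) : ℝ := (1+x) * Real.log (1+x) + (1-x) * Real.log (1-x)

lemma gg_even (x : ℝ) : gg (-x) = gg x := by
  unfold gg
  rw [show (1:ℝ) + -x = 1 - x by ring, show (1:ℝ) - -x = 1 + x by ring]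
  ring

lemma gg_zero : gg 0 = 0 := by simp [gg]

lemma gg_one : gg 1 = 2 * Real.log 2 := by
  unfold gg; norm_num

lemma gg_cont : Continuous gg := by
  have h1 : Continuous fun x : ℝ => (1+x) * Real.log (1+x) := by
    have := Real.continuous_mul_log.comp ((continuous_const.add continuous_id) : Continuous fun x:ℝ => 1 + x)
    exact this
  have h2 : Continuous fun x : ℝ => (1-x) * Real.log (1-x) := by
    have := Real.continuous_mul_log.comp ((continuous_const.sub continuous_id) : Continuous fun x:ℝ => 1 - x)
    exact this
  exact h1.add h2

lemma gg_hasDeriv {x : ℝ} (h1 : -1 < x) (h2 : x < 1) :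
    HasDerivAt gg (Real.log (1+x) - Real.log (1-x)) x := by
  have h1' : (0:ℝ) < 1 + x := by linarith
  have h2' : (0:ℝ) < 1 - x := by linarith
  have A : HasDerivAt (fun y : ℝ => (1+y) * Real.log (1+y)) (Real.log (1+x) + 1) x := by
    have hin : HasDerivAt (fun y : ℝ => 1 + y) 1 x := (hasDerivAt_id x).const_add 1
    have := (Real.hasDerivAt_mul_log (ne_of_gt h1')).comp x hin
    exact this.congr_deriv (by ring)
  have B : HasDerivAt (fun y : ℝ => (1-y) * Real.log (1-y)) (-(Real.log (1-x) + 1)) x := by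
    have hin : HasDerivAt (fun y : ℝ => 1 - y) (-1) x := (hasDerivAt_id x).const_sub 1
    have := (Real.hasDerivAt_mul_log (ne_of_gt h2')).comp x hin
    exact this.congr_deriv (by ring)
  have := A.add B
  exact this.congr_deriv (by ring)

lemma gd_hasDeriv {x : ℝ} (h1 : -1 < x) (h2 : x < 1) :
    HasDerivAt (fun y : ℝ => Real.log (1+y) - Real.log (1-y)) (1/(1+x) + 1/(1-x)) x := by
  have h1' : (0:ℝ) < 1 + x := by linarith
  have h2' : (0:ℝ) < 1 - x := by linarith
  have A : HasDerivAt (fun y : ℝ => Real.log (1+y)) (1/(1+x)) x := by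
    have hin : HasDerivAt (fun y : ℝ => 1 + y) 1 x := (hasDerivAt_id x).const_add 1
    have := (Real.hasDerivAt_log (ne_of_gt h1')).comp x hin
    exact this.congr_deriv (by ring)
  have B : HasDerivAt (fun y : ℝ => Real.log (1-y)) (-(1/(1-x))) x := by
    have hin : HasDerivAt (fun y : ℝ => 1 - y) (-1) x := (hasDerivAt_id x).const_sub 1
    have := (Real.hasDerivAt_log (ne_of_gt h2')).comp x hin
    exact this.congr_deriv (by ring)
  have := A.sub B
  exact this.congr_deriv (by ring)

end

noncomputable section

lemma log2_lt_one : Real.log 2 < 1 := by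
  have := Real.log_two_lt_d9; linarith

lemma log2_pos : (0:ℝ) < Real.log 2 := by
  have := Real.log_two_gt_d9; linarith

/-- Lower bound on `[0,1]`. -/
lemma gg_lower_half : ∀ x ∈ Set.Icc (0:ℝ) 1, Real.log 2 * x^2 ≤ gg x := by
  intro x hx
  obtain ⟨hx0, hx1⟩ := hx
  rcases eq_or_lt_of_le hx1 with rfl | hx1
  · rw [gg_one]; nlinarith [log2_pos]
  -- work on [0,1)
  set F : ℝ → ℝ := fun y => gg y - Real.log 2 * y^2 with hF
  set F' : ℝ → ℝ := fun y => (Real.log (1+y) - Real.log (1-y)) - 2*Real.log 2*y with hF'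
  have hder : ∀ y ∈ Set.Ioo (-1:ℝ) 1, HasDerivAt F (F' y) y := by
    intro y hy
    have h := (gg_hasDeriv hy.1 hy.2).sub (((hasDerivAt_pow 2 y).const_mul (Real.log 2)))
    exact h.congr_deriv (by simp [hF']; ring)
  have hder2 : ∀ y ∈ Set.Ioo (-1:ℝ) 1, HasDerivAt F' ((1/(1+y) + 1/(1-y)) - 2*Real.log 2) y := by
    intro y hy
    have h := (gd_hasDeriv hy.1 hy.2).sub ((hasDerivAt_id y).const_mul (2*Real.log 2))
    exact h.congr_deriv (by ring)
  have hsub : Set.Ico (0:ℝ) 1 ⊆ Set.Ioo (-1:ℝ) 1 := fun y hy => ⟨by linarith [hy.1], hy.2⟩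
  have hintsub : Set.Ioo (0:ℝ) 1 ⊆ Set.Ioo (-1:ℝ) 1 := fun y hy => ⟨by linarith [hy.1], hy.2⟩
  -- F' is monotone on [0,1)
  have hmono' : MonotoneOn F' (Set.Ico (0:ℝ) 1) := by
    apply monotoneOn_of_hasDerivWithinAt_nonneg (convex_Ico 0 1)
      (fun y hy => ((hder2 y (hsub hy)).continuousAt).continuousWithinAt)
      (fun y hy => ((hder2 y (hintsub (by rwa [interior_Ico] at hy))).hasDerivWithinAt))
    intro y hy
    rw [interior_Ico] at hy
    obtain ⟨hy0, hy1⟩ := hy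
    have h1' : (0:ℝ) < 1 + y := by linarith
    have h2' : (0:ℝ) < 1 - y := by linarith
    have e1 : 1 - y ≤ 1/(1+y) := by
      rw [le_div_iff₀ h1']; nlinarith
    have e2 : 1 + y ≤ 1/(1-y) := by
      rw [le_div_iff₀ h2']; nlinarith
    nlinarith [log2_lt_one]
  have hF'0 : F' 0 = 0 := by simp [hF']
  have hF'nonneg : ∀ y ∈ Set.Ico (0:ℝ) 1, 0 ≤ F' y := by
    intro y hy
    have := hmono' (by constructor <;> norm_num) hy hy.1
    rwa [hF'0] at this
  have hmono : MonotoneOn F (Set.Ico (0:ℝ) 1) := by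
    apply monotoneOn_of_hasDerivWithinAt_nonneg (convex_Ico 0 1)
      (fun y hy => ((hder y (hsub hy)).continuousAt).continuousWithinAt)
      (fun y hy => ((hder y (hintsub (by rwa [interior_Ico] at hy))).hasDerivWithinAt))
    intro y hy
    rw [interior_Ico] at hy
    exact hF'nonneg y ⟨le_of_lt hy.1, hy.2⟩
  have hF0 : F 0 = 0 := by simp [hF, gg_zero]
  have := hmono (by constructor <;> norm_num) ⟨hx0, hx1⟩ hx0
  rw [hF0] at this
  simpa [hF] using this

end

noncomputable section

lemma gg_upper_half : ∀ x ∈ Set.Icc (0:ℝ) 1, gg x ≤ 2 * Real.log 2 * x^2 := by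
  have hl2 := log2_pos
  have hl1 := log2_lt_one
  set c : ℝ := Real.sqrt (1 - 1/(2*Real.log 2)) with hc
  have hcsq' : (0:ℝ) < 1 - 1/(2*Real.log 2) := by
    have h05 : (1:ℝ)/2 < Real.log 2 := by have := Real.log_two_gt_d9; linarith
    have : 1/(2*Real.log 2) < 1 := by
      rw [div_lt_one (by linarith)]; linarith
    linarith
  have hcsq : c^2 = 1 - 1/(2*Real.log 2) := Real.sq_sqrt (le_of_lt hcsq')
  have hc0 : 0 < c := Real.sqrt_pos.mpr hcsq'
  have hc1 : c < 1 := by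
    rw [hc]
    have : (1:ℝ) - 1/(2*Real.log 2) < 1 := by
      have : 0 < 1/(2*Real.log 2) := by positivity
      linarith
    calc Real.sqrt (1 - 1/(2*Real.log 2)) < Real.sqrt 1 := by
          apply Real.sqrt_lt_sqrt (le_of_lt hcsq') this
      _ = 1 := Real.sqrt_one
  set φ : ℝ → ℝ := fun y => 2*Real.log 2*y^2 - gg y with hφ
  set φ' : ℝ → ℝ := fun y => 4*Real.log 2*y - (Real.log (1+y) - Real.log (1-y)) with hφ'
  have hder : ∀ y ∈ Set.Ioo (-1:ℝ) 1, HasDerivAt φ (φ' y) y := by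
    intro y hy
    have h := (((hasDerivAt_pow 2 y).const_mul (2*Real.log 2))).sub (gg_hasDeriv hy.1 hy.2)
    exact h.congr_deriv (by simp [hφ']; ring)
  have hder2 : ∀ y ∈ Set.Ioo (-1:ℝ) 1,
      HasDerivAt φ' (4*Real.log 2 - (1/(1+y) + 1/(1-y))) y := by
    intro y hy
    have h := (((hasDerivAt_id y).const_mul (4*Real.log 2))).sub (gd_hasDeriv hy.1 hy.2)
    exact h.congr_deriv (by ring)
  have hsub1 : Set.Icc (0:ℝ) c ⊆ Set.Ioo (-1:ℝ) 1 :=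
    fun y hy => ⟨by linarith [hy.1], by linarith [hy.2]⟩
  -- Piece 1: φ ≥ 0 on [0, c]
  have piece1 : ∀ y ∈ Set.Icc (0:ℝ) c, 0 ≤ φ y := by
    have hmono' : MonotoneOn φ' (Set.Icc (0:ℝ) c) := by
      apply monotoneOn_of_hasDerivWithinAt_nonneg (convex_Icc 0 c)
        (fun y hy => ((hder2 y (hsub1 hy)).continuousAt).continuousWithinAt)
        (fun y hy => ((hder2 y (hsub1 (interior_subset hy))).hasDerivWithinAt))
      intro y hy
      rw [interior_Icc] at hy
      obtain ⟨hy0, hyc⟩ := hy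
      have h1' : (0:ℝ) < 1 + y := by linarith
      have h2' : (0:ℝ) < 1 - y := by linarith [hyc, hc1]
      have hy1 : y < 1 := by linarith
      have hysq : y^2 < c^2 := by nlinarith
      have hkey : 1/(2*Real.log 2) < 1 - y^2 := by rw [hcsq] at hysq; linarith
      have h2l : (0:ℝ) < 2*Real.log 2 := by linarith
      have hkey' : 1 < (1 - y^2) * (2*Real.log 2) := (div_lt_iff₀ h2l).mp hkey
      have : 1/(1+y) + 1/(1-y) ≤ 4*Real.log 2 := by
        rw [div_add_div _ _ (ne_of_gt h1') (ne_of_gt h2'), div_le_iff₀ (by positivity)]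
        nlinarith
      linarith
    have hφ'0 : φ' 0 = 0 := by simp [hφ']
    have hφ'nonneg : ∀ y ∈ Set.Icc (0:ℝ) c, 0 ≤ φ' y := by
      intro y hy
      have := hmono' ⟨le_refl 0, le_of_lt hc0⟩ hy hy.1
      rwa [hφ'0] at this
    have hmono : MonotoneOn φ (Set.Icc (0:ℝ) c) := by
      apply monotoneOn_of_hasDerivWithinAt_nonneg (convex_Icc 0 c)
        (fun y hy => ((hder y (hsub1 hy)).continuousAt).continuousWithinAt)
        (fun y hy => ((hder y (hsub1 (interior_subset hy))).hasDerivWithinAt))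
      intro y hy
      rw [interior_Icc] at hy
      exact hφ'nonneg y ⟨le_of_lt hy.1, le_of_lt hy.2⟩
    intro y hy
    have hφ0 : φ 0 = 0 := by simp [hφ, gg_zero]
    have := hmono ⟨le_refl 0, le_of_lt hc0⟩ hy hy.1
    rwa [hφ0] at this
  -- Piece 2: φ concave on [c, 1], hence ≥ min of endpoints = 0
  have hφ1 : φ 1 = 0 := by simp [hφ, gg_one]
  have hφcont : Continuous φ := by
    apply Continuous.sub
    · exact continuous_const.mul (continuous_pow 2)
    · exact gg_cont
  have hconc : ConcaveOn ℝ (Set.Icc c 1) φ := by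
    apply concaveOn_of_hasDerivWithinAt2_nonpos (convex_Icc c 1) hφcont.continuousOn
      (f' := φ')
      (fun y hy => by
        rw [interior_Icc] at hy
        exact (hder y ⟨by linarith [hy.1], hy.2⟩).hasDerivWithinAt)
      (fun y hy => by
        rw [interior_Icc] at hy
        exact (hder2 y ⟨by linarith [hy.1], hy.2⟩).hasDerivWithinAt)
    intro y hy
    rw [interior_Icc] at hy
    obtain ⟨hyc, hy1⟩ := hy
    have hy0 : 0 < y := lt_trans hc0 hyc
    have h1' : (0:ℝ) < 1 + y := by linarith
    have h2' : (0:ℝ) < 1 - y := by linarith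
    have hysq : c^2 < y^2 := by nlinarith
    have hkey : 1 - y^2 < 1/(2*Real.log 2) := by rw [hcsq] at hysq; linarith
    have h2l : (0:ℝ) < 2*Real.log 2 := by linarith
    have hkey' : (1 - y^2) * (2*Real.log 2) < 1 := (lt_div_iff₀ h2l).mp hkey
    have : 4*Real.log 2 ≤ 1/(1+y) + 1/(1-y) := by
      rw [div_add_div _ _ (ne_of_gt h1') (ne_of_gt h2'), le_div_iff₀ (by positivity)]
      nlinarith
    linarith
  have piece2 : ∀ y ∈ Set.Icc c 1, 0 ≤ φ y := by
    intro y hy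
    have hseg : y ∈ segment ℝ c 1 := by
      rw [segment_eq_Icc (le_of_lt hc1)]; exact hy
    have := hconc.ge_on_segment (Set.left_mem_Icc.mpr (le_of_lt hc1))
      (Set.right_mem_Icc.mpr (le_of_lt hc1)) hseg
    have hmin : (0:ℝ) ≤ min (φ c) (φ 1) := by
      rw [hφ1]
      exact le_min (piece1 c ⟨le_of_lt hc0, le_refl c⟩) (le_refl 0)
    linarith
  intro x hx
  rcases le_or_gt x c with h | h
  · have := piece1 x ⟨hx.1, h⟩; simpa [hφ] using this
  · have := piece2 x ⟨le_of_lt h, hx.2⟩; simpa [hφ] using this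

lemma gg_lower : ∀ x ∈ Set.Icc (-1:ℝ) 1, Real.log 2 * x^2 ≤ gg x := by
  intro x hx
  rcases le_total 0 x with h | h
  · exact gg_lower_half x ⟨h, hx.2⟩
  · have := gg_lower_half (-x) ⟨by linarith, by linarith [hx.1]⟩
    rw [gg_even] at this
    simpa using this

lemma gg_upper : ∀ x ∈ Set.Icc (-1:ℝ) 1, gg x ≤ 2*Real.log 2 * x^2 := by
  intro x hx
  rcases le_total 0 x with h | h
  · exact gg_upper_half x ⟨h, hx.2⟩
  · have := gg_upper_half (-x) ⟨by linarith, by linarith [hx.1]⟩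
    rw [gg_even] at this
    simpa using this

end

noncomputable section

lemma term_eq (t q : ℝ) (ht : 0 ≤ t) (hq : 0 < q) :
    (if 0 < t then t * Real.logb 2 (t/(1/2*q)) else 0)
      = (q/2) * ((2*t/q) * Real.log (2*t/q)) / Real.log 2 := by
  rcases eq_or_lt_of_le ht with h0 | hpos
  · rw [if_neg (by rw [← h0]; exact lt_irrefl 0)]
    rw [← h0]
    simp
  · rw [if_pos hpos, show t/(1/2*q) = 2*t/q from by field_simp, Real.logb]
    field_simp

lemma key (r s : ℝ) (hr : 0 ≤ r) (hs : 0 ≤ s) :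
    (1/2) * (if 0 < r + s then (r-s)^2/(r+s) else 0) ≤
      ((if 0 < r then r * Real.logb 2 (r/(1/2*(r+s))) else 0) +
       (if 0 < s then s * Real.logb 2 (s/(1/2*(r+s))) else 0)) ∧
    ((if 0 < r then r * Real.logb 2 (r/(1/2*(r+s))) else 0) +
     (if 0 < s then s * Real.logb 2 (s/(1/2*(r+s))) else 0)) ≤
      (if 0 < r + s then (r-s)^2/(r+s) else 0) := by
  by_cases hq : 0 < r + s
  · have hqne : r + s ≠ 0 := ne_of_gt hq
    set x : ℝ := (r - s)/(r + s) with hxdef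
    have hx : x ∈ Set.Icc (-1:ℝ) 1 := by
      constructor
      · rw [le_div_iff₀ hq]; linarith
      · rw [div_le_one hq]; linarith
    have h1x : 1 + x = 2*r/(r+s) := by rw [hxdef]; field_simp; ring
    have h2x : 1 - x = 2*s/(r+s) := by rw [hxdef]; field_simp; ring
    have hgg : gg x = (2*r/(r+s)) * Real.log (2*r/(r+s))
        + (2*s/(r+s)) * Real.log (2*s/(r+s)) := by
      rw [gg, h1x, h2x]
    have hM : (if 0 < r then r * Real.logb 2 (r/(1/2*(r+s))) else 0) +
        (if 0 < s then s * Real.logb 2 (s/(1/2*(r+s))) else 0)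
        = ((r+s)/2) * gg x / Real.log 2 := by
      rw [term_eq r (r+s) hr hq, term_eq s (r+s) hs hq, hgg]
      ring
    have hE2 : (r-s)^2/(r+s) = (r+s) * x^2 := by
      rw [hxdef]; field_simp
    rw [if_pos hq, hM, hE2]
    have hL := gg_lower x hx
    have hU := gg_upper x hx
    constructor
    · rw [le_div_iff₀ log2_pos]
      nlinarith
    · rw [div_le_iff₀ log2_pos]
      nlinarith
  · have hr0 : r = 0 := by
      rcases eq_or_lt_of_le hr with h | h
      · exact h.symm
      · exact absurd (by linarith : 0 < r + s) hq
    have hs0 : s = 0 := by linarith [hr, hs, hr0]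
    simp [hr0, hs0]

end

/-- If `U` is uniform on `{-1,+1}`, then
`(1/2) * I2(A;U) ≤ I_KL(U;A) ≤ I2(A;U)`. -/
theorem stmt1 {Ω α : Type*} [Fintype Ω] (p : Ω → ℝ)
    (hp : ∀ ω, 0 ≤ p ω) (hps : ∑ ω, p ω = 1)
    (A : Ω → α) (U : Ω → ℝ) (hU : ∀ ω, U ω = 1 ∨ U ω = -1)
    (hunif : pr p (fun ω => U ω = 1) = 1/2 ∧ pr p (fun ω => U ω = -1) = 1/2) :
    (1/2) * I2 p A U ≤ IKL p U A ∧ IKL p U A ≤ I2 p A U := by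
  obtain ⟨h1, h2⟩ := hunif
  have hprnn : ∀ E : Ω → Prop, 0 ≤ pr p E := fun E => Finset.sum_nonneg fun ω _ => hp ω
  have hone : (1:ℝ) ≠ -1 := by norm_num
  have himU : Finset.univ.image U = ({1, -1} : Finset ℝ) := by
    apply Finset.Subset.antisymm
    · intro b hb
      rw [Finset.mem_image] at hb
      obtain ⟨ω, _, rfl⟩ := hb
      rcases hU ω with h | h <;> simp [h]
    · intro b hb
      rw [Finset.mem_insert, Finset.mem_singleton] at hb
      rw [Finset.mem_image]
      rcases hb with rfl | rfl
      · by_contra hcon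
        push_neg at hcon
        have hz : pr p (fun ω => U ω = 1) = 0 := by
          unfold pr
          rw [Finset.filter_false_of_mem, Finset.sum_empty]
          intro ω hω
          exact hcon ω hω
        rw [hz] at h1; norm_num at h1
      · by_contra hcon
        push_neg at hcon
        have hz : pr p (fun ω => U ω = -1) = 0 := by
          unfold pr
          rw [Finset.filter_false_of_mem, Finset.sum_empty]
          intro ω hω
          exact hcon ω hω
        rw [hz] at h2; norm_num at h2
  have hq_eq : ∀ a : α, pr p (fun ω => A ω = a)
      = pr p (fun ω => A ω = a ∧ U ω = 1) + pr p (fun ω => A ω = a ∧ U ω = -1) := by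
    intro a
    have hsplit : (Finset.univ.filter (fun ω => A ω = a))
        = (Finset.univ.filter (fun ω => A ω = a ∧ U ω = 1))
          ∪ (Finset.univ.filter (fun ω => A ω = a ∧ U ω = -1)) := by
      ext ω
      simp only [Finset.mem_filter, Finset.mem_univ, true_and, Finset.mem_union]
      rcases hU ω with h | h <;> simp [h] <;> tauto
    have hdisj : Disjoint (Finset.univ.filter (fun ω => A ω = a ∧ U ω = 1))
        (Finset.univ.filter (fun ω => A ω = a ∧ U ω = -1)) := by
      rw [Finset.disjoint_left]
      intro ω hω1 hω2
      simp only [Finset.mem_filter, Finset.mem_univ, true_and] at hω1 hω2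
      rw [hω1.2] at hω2
      norm_num at hω2
    unfold pr
    rw [hsplit, Finset.sum_union hdisj]
    congr 1 <;>
      · apply Finset.sum_congr _ fun _ _ => rfl
        ext x
        simp
  have hswap : ∀ (a : α) (b : ℝ),
      pr p (fun ω => U ω = b ∧ A ω = a) = pr p (fun ω => A ω = a ∧ U ω = b) := by
    intro a b
    unfold pr
    congr 1
    ext ω
    simp only [Finset.mem_filter, Finset.mem_univ, true_and]
    tauto
  have hI2 : I2 p A U = ∑ a ∈ Finset.univ.image A,
      (if 0 < pr p (fun ω => A ω = a ∧ U ω = 1) + pr p (fun ω => A ω = a ∧ U ω = -1) then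
        (pr p (fun ω => A ω = a ∧ U ω = 1) - pr p (fun ω => A ω = a ∧ U ω = -1))^2
          / (pr p (fun ω => A ω = a ∧ U ω = 1) + pr p (fun ω => A ω = a ∧ U ω = -1))
      else 0) := by
    unfold I2
    rw [himU]
    refine Finset.sum_congr rfl (fun a _ => ?_)
    rw [Finset.sum_pair hone, h1, h2, hq_eq a]
    generalize pr p (fun ω => A ω = a ∧ U ω = 1) = R
    generalize pr p (fun ω => A ω = a ∧ U ω = -1) = S
    by_cases hq : 0 < R + S
    · rw [if_pos (by linarith), if_pos (by linarith), if_pos hq]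
      have hne : R + S ≠ 0 := ne_of_gt hq
      field_simp
      ring
    · rw [if_neg (fun h => hq (by linarith)), if_neg (fun h => hq (by linarith)), if_neg hq]
      norm_num
  have hIKL : IKL p U A = ∑ a ∈ Finset.univ.image A,
      ((if 0 < pr p (fun ω => A ω = a ∧ U ω = 1) then
          pr p (fun ω => A ω = a ∧ U ω = 1) * Real.logb 2 (pr p (fun ω => A ω = a ∧ U ω = 1)
            / (1/2 * (pr p (fun ω => A ω = a ∧ U ω = 1) + pr p (fun ω => A ω = a ∧ U ω = -1))))
        else 0) +
       (if 0 < pr p (fun ω => A ω = a ∧ U ω = -1) then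
          pr p (fun ω => A ω = a ∧ U ω = -1) * Real.logb 2 (pr p (fun ω => A ω = a ∧ U ω = -1)
            / (1/2 * (pr p (fun ω => A ω = a ∧ U ω = 1) + pr p (fun ω => A ω = a ∧ U ω = -1))))
        else 0)) := by
    unfold IKL
    rw [himU, Finset.sum_pair hone, ← Finset.sum_add_distrib]
    refine Finset.sum_congr rfl (fun a _ => ?_)
    rw [hswap a 1, hswap a (-1), h1, h2, hq_eq a]
  constructor
  · rw [hI2, hIKL, Finset.mul_sum]
    apply Finset.sum_le_sum
    intro a _
    exact (key _ _ (hprnn _) (hprnn _)).1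
  · rw [hI2, hIKL]
    apply Finset.sum_le_sum
    intro a _
    exact (key _ _ (hprnn _) (hprnn _)).2


end
end

section
/- Let U, V, W be i.i.d. uniform on {−1,+1}, and let A and B be random variables taking values in finite sets such that for all values a, b and all spins u, v, w one has P(A=a, B=b | U=u, V=v, W=w) = f(a, u·w)·g(b, w·v), where f(·, s) and g(·, s) are probability mass functions for each s ∈ {−1,+1} (i.e., A is the output of a channel applied to U·W, B is the output of an independent channel applied to W·V). Then E[(E[U·V | A, B])²] = E[(E[U·W | A])²] · E[(E[W·V | B])²]. Equivalently, I2(U·V; (A,B)) = I2(U·W; A) · I2(W·V; B). -/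
open Finset
open scoped Classical

noncomputable section

section Aux
variable {Ω : Type*} [Fintype Ω]

theorem pr_congr (p : Ω → ℝ) {E F : Ω → Prop} (h : ∀ ω, E ω ↔ F ω) : pr p E = pr p F := by
  unfold pr
  congr 1
  apply Finset.filter_congr
  intro x _
  simp [h x]

theorem expec_congr (p : Ω → ℝ) {F G : Ω → ℝ} (h : ∀ ω, F ω = G ω) :
    expec p F = expec p G := by
  unfold expec; exact Finset.sum_congr rfl fun ω _ => by rw [h]

theorem pr_eq_expec (p : Ω → ℝ) (E : Ω → Prop) :
    pr p E = expec p (fun ω => if E ω then 1 else 0) := by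
  unfold pr expec
  rw [Finset.sum_filter]
  exact Finset.sum_congr rfl fun ω _ => by by_cases h : E ω <;> simp [h]

theorem expec_comp {γ : Type*} (p : Ω → ℝ) (T : Ω → γ) (s : Finset γ)
    (hT : ∀ ω, T ω ∈ s) (K : γ → ℝ) :
    expec p (fun ω => K (T ω)) = ∑ t ∈ s, pr p (fun ω => T ω = t) * K t := by
  unfold expec pr
  have h1 : ∀ t ∈ s, (∑ ω ∈ Finset.univ.filter (fun ω => T ω = t), p ω) * K t
      = ∑ ω, if T ω = t then p ω * K t else 0 := by
    intro t _
    rw [Finset.sum_filter, Finset.sum_mul]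
    exact Finset.sum_congr rfl fun ω _ => by split_ifs <;> simp
  rw [Finset.sum_congr rfl h1, Finset.sum_comm]
  refine Finset.sum_congr rfl fun ω _ => ?_
  rw [Finset.sum_ite_eq s (T ω) (fun t => p ω * K t), if_pos (hT ω)]

theorem pr_zero {γ : Type*} (p : Ω → ℝ) (T : Ω → γ) (t : γ)
    (h : t ∉ Finset.univ.image T) : pr p (fun ω => T ω = t) = 0 :=
  Finset.sum_eq_zero fun ω hω =>
    absurd ((Finset.mem_filter.mp hω).2)
      (fun hT => h (Finset.mem_image.mpr ⟨ω, Finset.mem_univ ω, hT⟩))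

theorem I2ext {Ω γ δ : Type*} [Fintype Ω] [Fintype δ] (p : Ω → ℝ) (X : Ω → γ) (T : Ω → δ)
    (s : Finset γ) (hs : Finset.univ.image X ⊆ s) :
    I2 p X T
    = ∑ x ∈ s, ∑ t : δ,
      if 0 < pr p (fun ω => X ω = x) * pr p (fun ω => T ω = t) then
        (pr p (fun ω => X ω = x ∧ T ω = t) - pr p (fun ω => X ω = x) * pr p (fun ω => T ω = t))^2
          / (pr p (fun ω => X ω = x) * pr p (fun ω => T ω = t))
      else 0 := by
  unfold I2
  calc _ = ∑ x ∈ Finset.univ.image X, ∑ t : δ,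
      (if 0 < pr p (fun ω => X ω = x) * pr p (fun ω => T ω = t) then
        (pr p (fun ω => X ω = x ∧ T ω = t) - pr p (fun ω => X ω = x) * pr p (fun ω => T ω = t))^2
          / (pr p (fun ω => X ω = x) * pr p (fun ω => T ω = t))
      else 0) := Finset.sum_congr rfl fun x _ =>
        Finset.sum_subset (Finset.subset_univ _) (fun t _ ht => by
          rw [pr_zero p T t ht]; simp)
    _ = _ := Finset.sum_subset hs (fun x _ hx => Finset.sum_eq_zero fun t _ => by
          rw [pr_zero p X x hx]; simp)

end Aux
set_option maxHeartbeats 2000000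

/-- If `U, V, W` are i.i.d. uniform on `{-1,+1}`, `A` is the output of a
channel `f` applied to `U·W`, and `B` is the output of an independent channel `g` applied to
`W·V`, then `E[(E[U·V | A,B])²] = E[(E[U·W | A])²]·E[(E[W·V | B])²]`, i.e.
`I2(U·V; (A,B)) = I2(U·W; A) · I2(W·V; B)`. -/
theorem stmt3 {Ω α β : Type*} [Fintype Ω] [Fintype α] [Fintype β]
    (p : Ω → ℝ) (hp : ∀ ω, 0 ≤ p ω) (hps : ∑ ω, p ω = 1)
    (U V W : Ω → ℝ) (A : Ω → α) (B : Ω → β)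
    (hUr : ∀ ω, U ω = 1 ∨ U ω = -1) (hVr : ∀ ω, V ω = 1 ∨ V ω = -1)
    (hWr : ∀ ω, W ω = 1 ∨ W ω = -1)
    (f : α → ℝ → ℝ) (g : β → ℝ → ℝ)
    (hf0 : ∀ a s, (s = 1 ∨ s = -1) → 0 ≤ f a s)
    (hf1 : ∀ s, (s = 1 ∨ s = -1) → ∑ a, f a s = 1)
    (hg0 : ∀ b s, (s = 1 ∨ s = -1) → 0 ≤ g b s)
    (hg1 : ∀ s, (s = 1 ∨ s = -1) → ∑ b, g b s = 1)
    (hjoint : ∀ u v w : ℝ, (u = 1 ∨ u = -1) → (v = 1 ∨ v = -1) → (w = 1 ∨ w = -1) →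
      ∀ (a : α) (b : β),
        pr p (fun ω => U ω = u ∧ V ω = v ∧ W ω = w ∧ A ω = a ∧ B ω = b)
          = 1/8 * (f a (u * w) * g b (w * v))) :
    expec p (fun ω => (condExp p (fun ω' => (A ω', B ω')) (fun ω' => U ω' * V ω') ω)^2)
      = expec p (fun ω => (condExp p A (fun ω' => U ω' * W ω') ω)^2) *
        expec p (fun ω => (condExp p B (fun ω' => W ω' * V ω') ω)^2) ∧
    I2 p (fun ω => U ω * V ω) (fun ω => (A ω, B ω))
      = I2 p (fun ω => U ω * W ω) A * I2 p (fun ω => W ω * V ω) B := by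
  have one_ne : (1:ℝ) ≠ -1 := by norm_num
  have hs2 : ∀ x : ℝ, x ∈ ({1, -1} : Finset ℝ) ↔ (x = 1 ∨ x = -1) := by
    intro x; simp
  have hmul : ∀ x : ℝ, (x = 1 ∨ x = -1) → ∀ y : ℝ, (y = 1 ∨ y = -1) → (x*y = 1 ∨ x*y = -1) := by
    rintro x (rfl|rfl) y (rfl|rfl) <;> norm_num
  have hmem : ∀ ω, (U ω, V ω, W ω, A ω, B ω) ∈
      (({1,-1} : Finset ℝ) ×ˢ (({1,-1} : Finset ℝ) ×ˢ (({1,-1} : Finset ℝ) ×ˢ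
        ((Finset.univ : Finset α) ×ˢ (Finset.univ : Finset β))))) := by
    intro ω
    simp [Finset.mem_product, hUr ω, hVr ω, hWr ω]
  have master : ∀ K : ℝ → ℝ → ℝ → α → β → ℝ,
      expec p (fun ω => K (U ω) (V ω) (W ω) (A ω) (B ω))
        = ∑ u ∈ ({1,-1} : Finset ℝ), ∑ v ∈ ({1,-1} : Finset ℝ), ∑ w ∈ ({1,-1} : Finset ℝ),
            ∑ a : α, ∑ b : β, 1/8 * (f a (u*w) * g b (w*v)) * K u v w a b := by
    intro K
    have h0 := expec_comp p (fun ω => (U ω, V ω, W ω, A ω, B ω)) _ hmem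
      (fun t => K t.1 t.2.1 t.2.2.1 t.2.2.2.1 t.2.2.2.2)
    rw [show (fun ω => K (U ω) (V ω) (W ω) (A ω) (B ω))
        = (fun ω => (fun t : ℝ×ℝ×ℝ×α×β => K t.1 t.2.1 t.2.2.1 t.2.2.2.1 t.2.2.2.2)
            ((U ω, V ω, W ω, A ω, B ω))) from rfl, h0]
    rw [Finset.sum_product]
    refine Finset.sum_congr rfl fun u hu => ?_
    rw [Finset.sum_product]
    refine Finset.sum_congr rfl fun v hv => ?_
    rw [Finset.sum_product]
    refine Finset.sum_congr rfl fun w hw => ?_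
    rw [Finset.sum_product]
    refine Finset.sum_congr rfl fun a _ => Finset.sum_congr rfl fun b _ => ?_
    rw [pr_congr p (F := fun ω => U ω = u ∧ V ω = v ∧ W ω = w ∧ A ω = a ∧ B ω = b)
      (fun ω => by simp [Prod.ext_iff, and_assoc]),
      hjoint u v w ((hs2 u).mp hu) ((hs2 v).mp hv) ((hs2 w).mp hw) a b]
  -- LP : joint indicator of A and B
  have LP : ∀ (a₀ : α) (b₀ : β) (φ : ℝ → ℝ → ℝ → ℝ),
      expec p (fun ω => if B ω = b₀ ∧ A ω = a₀ then φ (U ω) (V ω) (W ω) else 0)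
        = ∑ u ∈ ({1,-1} : Finset ℝ), ∑ v ∈ ({1,-1} : Finset ℝ), ∑ w ∈ ({1,-1} : Finset ℝ),
            1/8 * (f a₀ (u*w) * g b₀ (w*v)) * φ u v w := by
    intro a₀ b₀ φ
    refine (master fun u v w a b => if b = b₀ ∧ a = a₀ then φ u v w else 0).trans ?_
    refine Finset.sum_congr rfl fun u hu => Finset.sum_congr rfl fun v hv =>
      Finset.sum_congr rfl fun w hw => ?_
    simp [mul_ite, mul_zero, ite_and, Finset.sum_ite_eq']
  have LPA : ∀ (a₀ : α) (φ : ℝ → ℝ → ℝ → ℝ),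
      expec p (fun ω => if A ω = a₀ then φ (U ω) (V ω) (W ω) else 0)
        = ∑ u ∈ ({1,-1} : Finset ℝ), ∑ v ∈ ({1,-1} : Finset ℝ), ∑ w ∈ ({1,-1} : Finset ℝ),
            1/8 * f a₀ (u*w) * φ u v w := by
    intro a₀ φ
    refine (master fun u v w a b => if a = a₀ then φ u v w else 0).trans ?_
    refine Finset.sum_congr rfl fun u hu => Finset.sum_congr rfl fun v hv =>
      Finset.sum_congr rfl fun w hw => ?_
    have hb : ∀ a : α, ∑ b : β, 1/8 * (f a (u*w) * g b (w*v)) * (if a = a₀ then φ u v w else 0)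
        = 1/8 * f a (u*w) * (if a = a₀ then φ u v w else 0) := by
      intro a
      calc ∑ b : β, 1/8 * (f a (u*w) * g b (w*v)) * (if a = a₀ then φ u v w else 0)
          = ∑ b : β, (1/8 * f a (u*w) * (if a = a₀ then φ u v w else 0)) * g b (w*v) :=
            Finset.sum_congr rfl fun b _ => by ring
        _ = (1/8 * f a (u*w) * (if a = a₀ then φ u v w else 0)) * ∑ b : β, g b (w*v) :=
            (Finset.mul_sum _ _ _).symm
        _ = _ := by
            rw [hg1 _ (hmul w ((hs2 w).mp hw) v ((hs2 v).mp hv)), mul_one]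
    rw [Finset.sum_congr rfl fun a _ => hb a]
    simp [mul_ite, mul_zero, Finset.sum_ite_eq']
  have LPB : ∀ (b₀ : β) (φ : ℝ → ℝ → ℝ → ℝ),
      expec p (fun ω => if B ω = b₀ then φ (U ω) (V ω) (W ω) else 0)
        = ∑ u ∈ ({1,-1} : Finset ℝ), ∑ v ∈ ({1,-1} : Finset ℝ), ∑ w ∈ ({1,-1} : Finset ℝ),
            1/8 * g b₀ (w*v) * φ u v w := by
    intro b₀ φ
    refine (master fun u v w a b => if b = b₀ then φ u v w else 0).trans ?_
    refine Finset.sum_congr rfl fun u hu => Finset.sum_congr rfl fun v hv =>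
      Finset.sum_congr rfl fun w hw => ?_
    have hb : ∀ a : α, ∑ b : β, 1/8 * (f a (u*w) * g b (w*v)) * (if b = b₀ then φ u v w else 0)
        = (1/8 * g b₀ (w*v) * φ u v w) * f a (u*w) := by
      intro a
      simp only [mul_ite, mul_zero, Finset.sum_ite_eq', Finset.mem_univ, if_true]
      ring
    rw [Finset.sum_congr rfl fun a _ => hb a, ← Finset.mul_sum,
      hf1 _ (hmul u ((hs2 u).mp hu) w ((hs2 w).mp hw)), mul_one]
  have LP0 : ∀ (φ : ℝ → ℝ → ℝ → ℝ),
      expec p (fun ω => φ (U ω) (V ω) (W ω))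
        = ∑ u ∈ ({1,-1} : Finset ℝ), ∑ v ∈ ({1,-1} : Finset ℝ), ∑ w ∈ ({1,-1} : Finset ℝ),
            1/8 * φ u v w := by
    intro φ
    refine (master fun u v w a b => φ u v w).trans ?_
    refine Finset.sum_congr rfl fun u hu => Finset.sum_congr rfl fun v hv =>
      Finset.sum_congr rfl fun w hw => ?_
    have hb : ∀ a : α, ∑ b : β, 1/8 * (f a (u*w) * g b (w*v)) * φ u v w
        = (1/8 * φ u v w) * f a (u*w) := by
      intro a
      calc ∑ b : β, 1/8 * (f a (u*w) * g b (w*v)) * φ u v w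
          = ∑ b : β, ((1/8 * φ u v w) * f a (u*w)) * g b (w*v) :=
            Finset.sum_congr rfl fun b _ => by ring
        _ = ((1/8 * φ u v w) * f a (u*w)) * ∑ b : β, g b (w*v) := (Finset.mul_sum _ _ _).symm
        _ = _ := by rw [hg1 _ (hmul w ((hs2 w).mp hw) v ((hs2 v).mp hv)), mul_one]
    rw [Finset.sum_congr rfl fun a _ => hb a, ← Finset.mul_sum,
      hf1 _ (hmul u ((hs2 u).mp hu) w ((hs2 w).mp hw)), mul_one]
  -- computed quantities
  have Q1 : ∀ a : α, pr p (fun ω => A ω = a) = (f a 1 + f a (-1))/2 := by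
    intro a
    refine (pr_eq_expec p _).trans ((LPA a fun _ _ _ => 1).trans ?_)
    simp only [Finset.sum_pair one_ne]
    norm_num
    try ring
  have Q2 : ∀ b : β, pr p (fun ω => B ω = b) = (g b 1 + g b (-1))/2 := by
    intro b
    refine (pr_eq_expec p _).trans ((LPB b fun _ _ _ => 1).trans ?_)
    simp only [Finset.sum_pair one_ne]
    norm_num
    try ring
  have Q3 : ∀ (a : α) (b : β), pr p (fun ω => (A ω, B ω) = (a, b))
      = (f a 1 + f a (-1))/2 * ((g b 1 + g b (-1))/2) := by
    intro a b
    refine (pr_eq_expec p _).trans ((expec_congr p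
      (G := fun ω => if B ω = b ∧ A ω = a then (1:ℝ) else 0)
      (fun ω => by
        by_cases h2 : A ω = a <;> by_cases h3 : B ω = b <;>
          simp [h2, h3, Prod.ext_iff])).trans
      ((LP a b fun _ _ _ => 1).trans ?_))
    simp only [Finset.sum_pair one_ne]
    norm_num
    try ring
  have Q4 : ∀ a : α, expec p (fun ω' => if A ω' = a then U ω' * W ω' else 0)
      = (f a 1 - f a (-1))/2 := by
    intro a
    refine (LPA a fun u v w => u * w).trans ?_
    simp only [Finset.sum_pair one_ne]
    norm_num
    try ring
  have Q5 : ∀ b : β, expec p (fun ω' => if B ω' = b then W ω' * V ω' else 0)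
      = (g b 1 - g b (-1))/2 := by
    intro b
    refine (LPB b fun u v w => w * v).trans ?_
    simp only [Finset.sum_pair one_ne]
    norm_num
    try ring
  have Q6 : ∀ (a : α) (b : β), expec p (fun ω' => if (A ω', B ω') = (a, b) then U ω' * V ω' else 0)
      = (f a 1 - f a (-1)) * (g b 1 - g b (-1))/4 := by
    intro a b
    refine (expec_congr p
      (G := fun ω => if B ω = b ∧ A ω = a then U ω * V ω else 0)
      (fun ω => by
        by_cases h2 : A ω = a <;> by_cases h3 : B ω = b <;>
          simp [h2, h3, Prod.ext_iff])).trans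
      ((LP a b fun u v w => u * v).trans ?_)
    simp only [Finset.sum_pair one_ne]
    norm_num
    try ring
  have Q7p : pr p (fun ω => U ω * V ω = 1) = 1/2 := by
    refine (pr_eq_expec p _).trans ((LP0 fun u v w => if u * v = 1 then 1 else 0).trans ?_)
    simp only [Finset.sum_pair one_ne]
    norm_num
  have Q7m : pr p (fun ω => U ω * V ω = -1) = 1/2 := by
    refine (pr_eq_expec p _).trans ((LP0 fun u v w => if u * v = -1 then 1 else 0).trans ?_)
    simp only [Finset.sum_pair one_ne]
    norm_num
  have Q9p : pr p (fun ω => U ω * W ω = 1) = 1/2 := by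
    refine (pr_eq_expec p _).trans ((LP0 fun u v w => if u * w = 1 then 1 else 0).trans ?_)
    simp only [Finset.sum_pair one_ne]
    norm_num
  have Q9m : pr p (fun ω => U ω * W ω = -1) = 1/2 := by
    refine (pr_eq_expec p _).trans ((LP0 fun u v w => if u * w = -1 then 1 else 0).trans ?_)
    simp only [Finset.sum_pair one_ne]
    norm_num
  have Q11p : pr p (fun ω => W ω * V ω = 1) = 1/2 := by
    refine (pr_eq_expec p _).trans ((LP0 fun u v w => if w * v = 1 then 1 else 0).trans ?_)
    simp only [Finset.sum_pair one_ne]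
    norm_num
  have Q11m : pr p (fun ω => W ω * V ω = -1) = 1/2 := by
    refine (pr_eq_expec p _).trans ((LP0 fun u v w => if w * v = -1 then 1 else 0).trans ?_)
    simp only [Finset.sum_pair one_ne]
    norm_num
  have Q8p : ∀ (a : α) (b : β), pr p (fun ω => U ω * V ω = 1 ∧ (A ω, B ω) = (a, b))
      = (f a 1 * g b 1 + f a (-1) * g b (-1))/4 := by
    intro a b
    refine (pr_eq_expec p _).trans ((expec_congr p
      (G := fun ω => if B ω = b ∧ A ω = a then (if U ω * V ω = 1 then (1:ℝ) else 0) else 0)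
      (fun ω => by
        by_cases h1 : U ω * V ω = 1 <;> by_cases h2 : A ω = a <;> by_cases h3 : B ω = b <;>
          simp [h1, h2, h3, Prod.ext_iff])).trans
      ((LP a b fun u v w => if u * v = 1 then 1 else 0).trans ?_))
    simp only [Finset.sum_pair one_ne]
    norm_num
    try ring
  have Q8m : ∀ (a : α) (b : β), pr p (fun ω => U ω * V ω = -1 ∧ (A ω, B ω) = (a, b))
      = (f a 1 * g b (-1) + f a (-1) * g b 1)/4 := by
    intro a b
    refine (pr_eq_expec p _).trans ((expec_congr p
      (G := fun ω => if B ω = b ∧ A ω = a then (if U ω * V ω = -1 then (1:ℝ) else 0) else 0)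
      (fun ω => by
        by_cases h1 : U ω * V ω = -1 <;> by_cases h2 : A ω = a <;> by_cases h3 : B ω = b <;>
          simp [h1, h2, h3, Prod.ext_iff])).trans
      ((LP a b fun u v w => if u * v = -1 then 1 else 0).trans ?_))
    simp only [Finset.sum_pair one_ne]
    norm_num
    try ring
  have Q10p : ∀ a : α, pr p (fun ω => U ω * W ω = 1 ∧ A ω = a) = f a 1 / 2 := by
    intro a
    refine (pr_eq_expec p _).trans ((expec_congr p
      (G := fun ω => if A ω = a then (if U ω * W ω = 1 then (1:ℝ) else 0) else 0)
      (fun ω => by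
        by_cases h1 : U ω * W ω = 1 <;> by_cases h2 : A ω = a <;> simp [h1, h2])).trans
      ((LPA a fun u v w => if u * w = 1 then 1 else 0).trans ?_))
    simp only [Finset.sum_pair one_ne]
    norm_num
    try ring
  have Q10m : ∀ a : α, pr p (fun ω => U ω * W ω = -1 ∧ A ω = a) = f a (-1) / 2 := by
    intro a
    refine (pr_eq_expec p _).trans ((expec_congr p
      (G := fun ω => if A ω = a then (if U ω * W ω = -1 then (1:ℝ) else 0) else 0)
      (fun ω => by
        by_cases h1 : U ω * W ω = -1 <;> by_cases h2 : A ω = a <;> simp [h1, h2])).trans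
      ((LPA a fun u v w => if u * w = -1 then 1 else 0).trans ?_))
    simp only [Finset.sum_pair one_ne]
    norm_num
    try ring
  have Q12p : ∀ b : β, pr p (fun ω => W ω * V ω = 1 ∧ B ω = b) = g b 1 / 2 := by
    intro b
    refine (pr_eq_expec p _).trans ((expec_congr p
      (G := fun ω => if B ω = b then (if W ω * V ω = 1 then (1:ℝ) else 0) else 0)
      (fun ω => by
        by_cases h1 : W ω * V ω = 1 <;> by_cases h2 : B ω = b <;> simp [h1, h2])).trans
      ((LPB b fun u v w => if w * v = 1 then 1 else 0).trans ?_))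
    simp only [Finset.sum_pair one_ne]
    norm_num
    try ring
  have Q12m : ∀ b : β, pr p (fun ω => W ω * V ω = -1 ∧ B ω = b) = g b (-1) / 2 := by
    intro b
    refine (pr_eq_expec p _).trans ((expec_congr p
      (G := fun ω => if B ω = b then (if W ω * V ω = -1 then (1:ℝ) else 0) else 0)
      (fun ω => by
        by_cases h1 : W ω * V ω = -1 <;> by_cases h2 : B ω = b <;> simp [h1, h2])).trans
      ((LPB b fun u v w => if w * v = -1 then 1 else 0).trans ?_))
    simp only [Finset.sum_pair one_ne]
    norm_num
    try ring

  have QcondA : ∀ ω, condExp p A (fun ω' => U ω' * W ω') ω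
      = ((f (A ω) 1 - f (A ω) (-1))/2) / ((f (A ω) 1 + f (A ω) (-1))/2) := by
    intro ω
    show expec p (fun ω' => if A ω' = A ω then U ω' * W ω' else 0)
        / pr p (fun ω' => A ω' = A ω)
      = ((f (A ω) 1 - f (A ω) (-1))/2) / ((f (A ω) 1 + f (A ω) (-1))/2)
    rw [Q4 (A ω), Q1 (A ω)]
  have QcondB : ∀ ω, condExp p B (fun ω' => W ω' * V ω') ω
      = ((g (B ω) 1 - g (B ω) (-1))/2) / ((g (B ω) 1 + g (B ω) (-1))/2) := by
    intro ω
    show expec p (fun ω' => if B ω' = B ω then W ω' * V ω' else 0)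
        / pr p (fun ω' => B ω' = B ω)
      = ((g (B ω) 1 - g (B ω) (-1))/2) / ((g (B ω) 1 + g (B ω) (-1))/2)
    rw [Q5 (B ω), Q2 (B ω)]
  have QcondP : ∀ ω, condExp p (fun ω' => (A ω', B ω')) (fun ω' => U ω' * V ω') ω
      = ((f (A ω) 1 - f (A ω) (-1)) * (g (B ω) 1 - g (B ω) (-1))/4)
        / ((f (A ω) 1 + f (A ω) (-1))/2 * ((g (B ω) 1 + g (B ω) (-1))/2)) := by
    intro ω
    simp only [condExp]
    rw [Q6 (A ω) (B ω), Q3 (A ω) (B ω)]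
  have eA : expec p (fun ω => (condExp p A (fun ω' => U ω' * W ω') ω)^2)
      = ∑ a : α, ((f a 1 + f a (-1))/2)
          * ((((f a 1 - f a (-1))/2) / ((f a 1 + f a (-1))/2))^2) := by
    refine (expec_congr p (G := fun ω => (fun a : α =>
        ((((f a 1 - f a (-1))/2) / ((f a 1 + f a (-1))/2))^2)) (A ω))
        (fun ω => by rw [QcondA ω])).trans ?_
    refine (expec_comp p A Finset.univ (fun ω => Finset.mem_univ _) (fun a : α =>
        ((((f a 1 - f a (-1))/2) / ((f a 1 + f a (-1))/2))^2))).trans ?_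
    exact Finset.sum_congr rfl fun a _ => by rw [Q1 a]
  have eB : expec p (fun ω => (condExp p B (fun ω' => W ω' * V ω') ω)^2)
      = ∑ b : β, ((g b 1 + g b (-1))/2)
          * ((((g b 1 - g b (-1))/2) / ((g b 1 + g b (-1))/2))^2) := by
    refine (expec_congr p (G := fun ω => (fun b : β =>
        ((((g b 1 - g b (-1))/2) / ((g b 1 + g b (-1))/2))^2)) (B ω))
        (fun ω => by rw [QcondB ω])).trans ?_
    refine (expec_comp p B Finset.univ (fun ω => Finset.mem_univ _) (fun b : β =>
        ((((g b 1 - g b (-1))/2) / ((g b 1 + g b (-1))/2))^2))).trans ?_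
    exact Finset.sum_congr rfl fun b _ => by rw [Q2 b]
  have eP : expec p (fun ω => (condExp p (fun ω' => (A ω', B ω')) (fun ω' => U ω' * V ω') ω)^2)
      = ∑ a : α, ∑ b : β, ((f a 1 + f a (-1))/2 * ((g b 1 + g b (-1))/2))
          * ((((f a 1 - f a (-1)) * (g b 1 - g b (-1))/4)
            / ((f a 1 + f a (-1))/2 * ((g b 1 + g b (-1))/2)))^2) := by
    refine (expec_congr p (G := fun ω => (fun t : α × β =>
        ((((f t.1 1 - f t.1 (-1)) * (g t.2 1 - g t.2 (-1))/4)
          / ((f t.1 1 + f t.1 (-1))/2 * ((g t.2 1 + g t.2 (-1))/2)))^2)) ((A ω, B ω)))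
        (fun ω => by rw [QcondP ω])).trans ?_
    refine (expec_comp p (fun ω => (A ω, B ω)) Finset.univ (fun ω => Finset.mem_univ _)
      (fun t : α × β => ((((f t.1 1 - f t.1 (-1)) * (g t.2 1 - g t.2 (-1))/4)
          / ((f t.1 1 + f t.1 (-1))/2 * ((g t.2 1 + g t.2 (-1))/2)))^2))).trans ?_
    rw [Fintype.sum_prod_type]
    exact Finset.sum_congr rfl fun a _ => Finset.sum_congr rfl fun b _ => by rw [Q3 a b]
  constructor
  · rw [eP, eA, eB, Finset.sum_mul_sum]
    refine Finset.sum_congr rfl fun a _ => Finset.sum_congr rfl fun b _ => ?_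
    have h4 : (f a 1 - f a (-1)) * (g b 1 - g b (-1))/4
        = ((f a 1 - f a (-1))/2) * ((g b 1 - g b (-1))/2) := by ring
    rw [h4, ← div_mul_div_comm]
    ring
  · have himgUV : Finset.univ.image (fun ω => U ω * V ω) ⊆ ({1,-1} : Finset ℝ) := by
      intro x hx
      rcases Finset.mem_image.mp hx with ⟨ω, _, rfl⟩
      exact (hs2 _).mpr (hmul _ (hUr ω) _ (hVr ω))
    have himgUW : Finset.univ.image (fun ω => U ω * W ω) ⊆ ({1,-1} : Finset ℝ) := by
      intro x hx
      rcases Finset.mem_image.mp hx with ⟨ω, _, rfl⟩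
      exact (hs2 _).mpr (hmul _ (hUr ω) _ (hWr ω))
    have himgWV : Finset.univ.image (fun ω => W ω * V ω) ⊆ ({1,-1} : Finset ℝ) := by
      intro x hx
      rcases Finset.mem_image.mp hx with ⟨ω, _, rfl⟩
      exact (hs2 _).mpr (hmul _ (hWr ω) _ (hVr ω))
    rw [I2ext p _ _ _ himgUV, I2ext p _ _ _ himgUW, I2ext p _ _ _ himgWV]
    simp only [Finset.sum_pair one_ne, Fintype.sum_prod_type]
    simp only [Q7p, Q7m, Q3, Q8p, Q8m, Q9p, Q9m, Q10p, Q10m, Q11p, Q11m, Q12p, Q12m, Q1, Q2]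
    simp only [← Finset.sum_add_distrib]
    rw [Finset.sum_mul_sum]
    refine Finset.sum_congr rfl fun a _ => Finset.sum_congr rfl fun b _ => ?_
    have hfa1 : 0 ≤ f a 1 := hf0 a 1 (Or.inl rfl)
    have hfa2 : 0 ≤ f a (-1) := hf0 a (-1) (Or.inr rfl)
    have hgb1 : 0 ≤ g b 1 := hg0 b 1 (Or.inl rfl)
    have hgb2 : 0 ≤ g b (-1) := hg0 b (-1) (Or.inr rfl)
    by_cases hSa : f a 1 + f a (-1) = 0
    · have e1 : f a 1 = 0 := by linarith
      have e2 : f a (-1) = 0 := by linarith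
      simp [e1, e2]
    by_cases hTb : g b 1 + g b (-1) = 0
    · have e1 : g b 1 = 0 := by linarith
      have e2 : g b (-1) = 0 := by linarith
      simp [e1, e2]
    have hSa' : 0 < f a 1 + f a (-1) :=
      lt_of_le_of_ne (by linarith) (Ne.symm hSa)
    have hTb' : 0 < g b 1 + g b (-1) :=
      lt_of_le_of_ne (by linarith) (Ne.symm hTb)
    have hg1' : (0:ℝ) < 1/2 * ((f a 1 + f a (-1))/2 * ((g b 1 + g b (-1))/2)) := by
      nlinarith [mul_pos hSa' hTb']
    have hg2' : (0:ℝ) < 1/2 * ((f a 1 + f a (-1))/2) := by nlinarith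
    have hg3' : (0:ℝ) < 1/2 * ((g b 1 + g b (-1))/2) := by nlinarith
    rw [if_pos hg1', if_pos hg1', if_pos hg2', if_pos hg2', if_pos hg3', if_pos hg3']
    field_simp
    ring
end
end

section
/- Let n ≥ 1 and let X₀, X₁, …, X_n be i.i.d. uniform on {−1,+1} (the spins along a path). Let Y₁, …, Y_n be random variables taking values in finite sets such that P(Y₁=y₁, …, Y_n=y_n | X₀, …, X_n) = Π_{i=1}^n q_i(y_i, X_{i−1}·X_i), where each q_i(·, s) is a probability mass function for each s ∈ {−1,+1}. Then E[(E[X₀·X_n | Y₁, …, Y_n])²] = Π_{i=1}^n E[(E[X_{i−1}·X_i | Y_i])²]. -/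
open Finset
open scoped Classical

noncomputable section

namespace Stmt6Aux


def signs : Finset ℝ := {1, -1}

lemma mem_signs {z : ℝ} : z ∈ signs ↔ z = 1 ∨ z = -1 := by
  simp [signs]

lemma signs_sq {z : ℝ} (h : z = 1 ∨ z = -1) : z * z = 1 := by
  rcases h with h | h <;> simp [h]

lemma prod_signs {ι : Type*} (s : Finset ι) (f : ι → ℝ) (h : ∀ i ∈ s, f i = 1 ∨ f i = -1) :
    (∏ i ∈ s, f i) = 1 ∨ (∏ i ∈ s, f i) = -1 := by
  refine Finset.prod_induction f (fun z => z = 1 ∨ z = -1) ?_ (Or.inl rfl) h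
  rintro a b (rfl | rfl) (rfl | rfl) <;> norm_num

def build {n : ℕ} (s : ℝ) (u : Fin n → ℝ) : Fin (n+1) → ℝ :=
  fun k => s * ∏ i ∈ Finset.univ.filter (fun i : Fin n => (i : ℕ) < (k : ℕ)), u i

lemma filter_succ {n : ℕ} (i : Fin n) :
    (Finset.univ.filter (fun j : Fin n => (j : ℕ) < ((i.succ : Fin (n+1)) : ℕ)))
      = insert i (Finset.univ.filter (fun j : Fin n => (j : ℕ) < ((i.castSucc : Fin (n+1)) : ℕ))) := by
  ext j
  simp [Nat.lt_succ_iff_lt_or_eq, Fin.ext_iff, or_comm]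
  rw [Fin.le_iff_val_le_val, Fin.lt_iff_val_lt_val]; omega

lemma build_zero {n : ℕ} (s : ℝ) (u : Fin n → ℝ) : build s u 0 = s := by
  simp [build]

lemma build_succ {n : ℕ} (s : ℝ) (u : Fin n → ℝ) (i : Fin n) :
    build s u i.succ = build s u i.castSucc * u i := by
  unfold build
  rw [filter_succ, Finset.prod_insert (by simp)]
  ring

lemma build_last {n : ℕ} (s : ℝ) (u : Fin n → ℝ) :
    build s u (Fin.last n) = s * ∏ i, u i := by
  unfold build
  congr 1
  apply Finset.prod_congr _ (fun _ _ => rfl)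
  rw [Finset.filter_true_of_mem]
  intro j _
  simpa using j.isLt

lemma build_mem {n : ℕ} {s : ℝ} {u : Fin n → ℝ} (hs : s = 1 ∨ s = -1)
    (hu : ∀ i, u i = 1 ∨ u i = -1) (k : Fin (n+1)) :
    build s u k = 1 ∨ build s u k = -1 := by
  unfold build
  have h := prod_signs (Finset.univ.filter (fun i : Fin n => (i : ℕ) < (k : ℕ))) u
    (fun i _ => hu i)
  rcases hs with rfl | rfl <;> rcases h with h | h <;> simp [h]

lemma build_edge {n : ℕ} {s : ℝ} {u : Fin n → ℝ} (hs : s = 1 ∨ s = -1)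
    (hu : ∀ i, u i = 1 ∨ u i = -1) (i : Fin n) :
    build s u i.castSucc * build s u i.succ = u i := by
  rw [build_succ, ← mul_assoc, signs_sq (build_mem hs hu i.castSucc), one_mul]

lemma tele {n : ℕ} (x : Fin (n+1) → ℝ) (hx : ∀ i, x i = 1 ∨ x i = -1) (k : Fin (n+1)) :
    x k = x 0 * ∏ i ∈ Finset.univ.filter (fun i : Fin n => (i : ℕ) < (k : ℕ)),
      (x i.castSucc * x i.succ) := by
  induction k using Fin.induction with
  | zero => simp
  | succ i ih =>
    rw [filter_succ, Finset.prod_insert (by simp)]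
    have h2 := signs_sq (hx i.castSucc)
    calc x i.succ = (x i.castSucc * x i.castSucc) * x i.succ := by rw [h2, one_mul]
      _ = x i.castSucc * (x i.castSucc * x i.succ) := by ring
      _ = (x 0 * ∏ j ∈ Finset.univ.filter
            (fun j : Fin n => (j : ℕ) < ((i.castSucc : Fin (n+1)) : ℕ)),
            (x j.castSucc * x j.succ)) * (x i.castSucc * x i.succ) := by rw [← ih]
      _ = x 0 * ((x i.castSucc * x i.succ) * ∏ j ∈ Finset.univ.filter
            (fun j : Fin n => (j : ℕ) < ((i.castSucc : Fin (n+1)) : ℕ)),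
            (x j.castSucc * x j.succ)) := by ring

lemma xbij {n : ℕ} (F : (Fin (n+1) → ℝ) → ℝ) :
    ∑ x ∈ Fintype.piFinset (fun _ : Fin (n+1) => signs), F x
      = ∑ s ∈ signs, ∑ u ∈ Fintype.piFinset (fun _ : Fin n => signs), F (build s u) := by
  rw [← Finset.sum_product']
  refine Finset.sum_nbij' (fun x => (x 0, fun i => x i.castSucc * x i.succ))
    (fun su => build su.1 su.2) ?_ ?_ ?_ ?_ ?_
  · intro x hx
    rw [Fintype.mem_piFinset] at hx
    rw [Finset.mem_product]
    refine ⟨hx 0, ?_⟩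
    rw [Fintype.mem_piFinset]
    intro i
    rw [mem_signs]
    rcases mem_signs.1 (hx i.castSucc) with h1 | h1 <;>
      rcases mem_signs.1 (hx i.succ) with h2 | h2 <;> simp [h1, h2]
  · intro su hsu
    rw [Finset.mem_product] at hsu
    rw [Fintype.mem_piFinset]
    intro k
    rw [mem_signs]
    exact build_mem (mem_signs.1 hsu.1) (fun i => mem_signs.1 ((Fintype.mem_piFinset).1 hsu.2 i)) k
  · intro x hx
    rw [Fintype.mem_piFinset] at hx
    funext k
    exact (tele x (fun i => mem_signs.1 (hx i)) k).symm
  · intro su hsu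
    rw [Finset.mem_product] at hsu
    have hs := mem_signs.1 hsu.1
    have hu := fun i => mem_signs.1 ((Fintype.mem_piFinset).1 hsu.2 i)
    refine Prod.ext (build_zero _ _) ?_
    funext i
    exact build_edge hs hu i
  · intro x hx
    rw [Fintype.mem_piFinset] at hx
    congr 1
    funext k
    exact tele x (fun i => mem_signs.1 (hx i)) k

lemma pr_eq_sum_filter {Ω : Type*} [Fintype Ω] (p : Ω → ℝ) (E : Ω → Prop) [DecidablePred E] :
    pr p E = ∑ ω ∈ Finset.univ.filter E, p ω := by
  unfold pr
  exact Finset.sum_congr (by ext ω; simp) (fun _ _ => rfl)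

lemma fiber_expec {Ω γ : Type*} [Fintype Ω] [Fintype γ] (p : Ω → ℝ) (A : Ω → γ)
    (G : γ → ℝ) :
    expec p (fun ω => G (A ω)) = ∑ c, G c * pr p (fun ω => A ω = c) := by
  unfold expec
  rw [← Finset.sum_fiberwise Finset.univ A (fun ω => p ω * G (A ω))]
  refine Finset.sum_congr rfl (fun c _ => ?_)
  rw [pr_eq_sum_filter, Finset.mul_sum]
  refine Finset.sum_congr (by ext ω; simp) (fun ω hω => ?_)
  rw [Finset.mem_filter] at hω
  rw [hω.2]
  exact mul_comm _ _

lemma pr_eq_expec {Ω : Type*} [Fintype Ω] (p : Ω → ℝ) (E : Ω → Prop) :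
    pr p E = expec p (fun ω => if E ω then (1:ℝ) else 0) := by
  rw [pr_eq_sum_filter]
  unfold expec
  rw [Finset.sum_filter]
  refine Finset.sum_congr rfl (fun ω _ => ?_)
  by_cases h : E ω <;> simp [h]

lemma ite_inst {P : Prop} (h1 h2 : Decidable P) (a b : ℝ) :
    @ite ℝ P h1 a b = @ite ℝ P h2 a b := by
  by_cases h : P
  · rw [if_pos h, if_pos h]
  · rw [if_neg h, if_neg h]

lemma sum_pick {γ : Type*} [Fintype γ] [DecidableEq γ] (y : γ) (v : γ → ℝ) (c : ℝ) :
    (∑ y' : γ, (if y' = y then c else 0) * v y') = c * v y := by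
  rw [Finset.sum_eq_single y (fun b _ hb => by rw [if_neg hb, zero_mul])
    (fun h => absurd (Finset.mem_univ y) h)]
  rw [if_pos rfl]

lemma signs_sum (g : ℝ → ℝ) : ∑ a ∈ signs, g a = g 1 + g (-1) := by
  rw [signs, Finset.sum_insert (by norm_num), Finset.sum_singleton]




lemma two_half (n : ℕ) (P : ℝ) : (2:ℝ) * ((1/2)^(n+1) * (2^n * P)) = P := by
  have h : ((1:ℝ)/2)^(n+1) * (2:ℝ)^(n+1) = 1 := by rw [← mul_pow]; norm_num
  linear_combination P * h

/-- marginalization: summing an indicator times a product over a pi type. -/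
lemma marg {n : ℕ} {β : Fin n → Type*} [∀ i, Fintype (β i)] (i0 : Fin n)
    (g : (i : Fin n) → β i → ℝ) (h1 : ∀ j, j ≠ i0 → ∑ b, g j b = 1) (c : β i0) :
    ∑ y : (i : Fin n) → β i, (if y i0 = c then (1:ℝ) else 0) * ∏ j, g j (y j)
      = g i0 c := by
  set R : (i : Fin n) → β i → ℝ :=
    Function.update g i0 (fun b => if b = c then g i0 b else 0) with hR
  have claim : ∀ y : (i : Fin n) → β i,
      (if y i0 = c then (1:ℝ) else 0) * ∏ j, g j (y j) = ∏ j, R j (y j) := by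
    intro y
    by_cases h : y i0 = c
    · rw [h, if_pos rfl, one_mul]
      refine Finset.prod_congr rfl (fun j _ => ?_)
      by_cases hj : j = i0
      · subst hj
        rw [hR, Function.update_self, if_pos h]
      · rw [hR, Function.update_of_ne hj]
    · rw [if_neg h, zero_mul]
      refine (Finset.prod_eq_zero (Finset.mem_univ i0) ?_).symm
      rw [hR, Function.update_self, if_neg h]
  rw [Finset.sum_congr rfl (fun y _ => claim y), ← Fintype.piFinset_univ,
    ← Finset.prod_univ_sum]
  rw [Finset.prod_eq_single i0]
  · rw [hR, Function.update_self, Finset.sum_ite_eq' Finset.univ c, if_pos (Finset.mem_univ c)]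
  · intro j _ hj
    rw [hR, Function.update_of_ne hj]
    exact h1 j hj
  · intro h
    exact absurd (Finset.mem_univ i0) h

/-- sum of a function of a single coordinate over the sign cube -/
lemma sum_proj {n : ℕ} (i0 : Fin n) (h : ℝ → ℝ) :
    ∑ u ∈ Fintype.piFinset (fun _ : Fin n => signs), h (u i0)
      = 2^(n-1) * (h 1 + h (-1)) := by
  set R : Fin n → ℝ → ℝ := Function.update (fun _ (_ : ℝ) => (1:ℝ)) i0 h with hR
  have claim : ∀ u : Fin n → ℝ, h (u i0) = ∏ j, R j (u j) := by
    intro u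
    rw [← Finset.mul_prod_erase Finset.univ _ (Finset.mem_univ i0), hR,
      Function.update_self]
    rw [Finset.prod_congr rfl (fun j hj => ?_), Finset.prod_const_one, mul_one]
    rw [Function.update_of_ne (Finset.mem_erase.1 hj).1]
  rw [Finset.sum_congr rfl (fun u _ => claim u), Finset.sum_prod_piFinset]
  rw [← Finset.mul_prod_erase Finset.univ _ (Finset.mem_univ i0), hR,
    Function.update_self, signs_sum]
  rw [Finset.prod_congr rfl (fun j hj => ?_), Finset.prod_const]
  · rw [Finset.card_erase_of_mem (Finset.mem_univ i0), Finset.card_univ,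
      Fintype.card_fin, mul_comm]
  · rw [Function.update_of_ne (Finset.mem_erase.1 hj).1, signs_sum]
    norm_num

lemma keyalg {ι : Type*} [Fintype ι] (a b : ι → ℝ) (h0 : ∀ i, a i = 0 → b i = 0) :
    ((∏ i, b i) / (∏ i, a i))^2 * (∏ i, a i) = ∏ i, ((b i / a i)^2 * a i) := by
  have hsc : ∀ x y : ℝ, y ≠ 0 → (x/y)^2 * y = x^2/y := by
    intro x y hy; field_simp
  by_cases h : ∃ i, a i = 0
  · obtain ⟨i, hi⟩ := h
    have h2 : (∏ j, ((b j / a j)^2 * a j)) = 0 :=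
      Finset.prod_eq_zero (Finset.mem_univ i) (by rw [h0 i hi, hi]; norm_num)
    rw [Finset.prod_eq_zero (Finset.mem_univ i) hi, h2]
    ring
  · push_neg at h
    have ha : (∏ i, a i) ≠ 0 := Finset.prod_ne_zero_iff.2 (fun i _ => h i)
    rw [hsc _ _ ha]
    rw [show (∏ i, ((b i / a i)^2 * a i)) = ∏ i, ((b i)^2 / a i) from
      Finset.prod_congr rfl (fun i _ => hsc _ _ (h i))]
    rw [Finset.prod_div_distrib, Finset.prod_pow]


lemma card_signs : signs.card = 2 := by
  rw [signs]
  rw [Finset.card_insert_of_notMem (by norm_num), Finset.card_singleton]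

lemma two_nsmul_eq (x : ℝ) : (2:ℕ) • x = 2 * x := by
  rw [nsmul_eq_mul]; norm_num

lemma norm_prod (n : ℕ) (v : Fin n → ℝ) :
    (2:ℝ) * ((1/2)^(n+1) * ∏ i, v i) = ∏ i, (v i / 2) := by
  have hp : (∏ i, (v i / 2)) = (∏ i, v i) / 2^n := by
    rw [Finset.prod_div_distrib, Finset.prod_const, Finset.card_univ, Fintype.card_fin]
  rw [hp, eq_div_iff (by positivity)]
  have h : ((1:ℝ)/2)^(n+1) * (2:ℝ)^(n+1) = 1 := by rw [← mul_pow]; norm_num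
  linear_combination (∏ i, v i) * h

lemma norm_single (n : ℕ) (hn : 1 ≤ n) (D : ℝ) :
    (2:ℝ) * ((1/2)^(n+1) * ((2:ℝ)^(n-1) * D)) = D / 2 := by
  obtain ⟨m, rfl⟩ : ∃ m, n = m + 1 := ⟨n - 1, by omega⟩
  simp only [Nat.add_sub_cancel]
  have h : ((1:ℝ)/2)^(m+2) * (2:ℝ)^(m+2) = 1 := by rw [← mul_pow]; norm_num
  rw [eq_div_iff (by norm_num : (2:ℝ) ≠ 0)]
  linear_combination D * h

end Stmt6Aux

/-- Spins `X₀, …, X_n` (`n ≥ 1`) i.i.d. uniform on `{-1,+1}` along a path,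
and edge observations `Y₁, …, Y_n` that are conditionally independent given the spins, with
`Y_i` the output of a channel `q i` applied to `X_{i-1}·X_i`. Then
`E[(E[X₀·X_n | Y])²] = ∏ i, E[(E[X_{i-1}·X_i | Y_i])²]`. -/
theorem stmt6 {Ω : Type*} [Fintype Ω] {n : ℕ} (hn : 1 ≤ n)
    {β : Fin n → Type*} [∀ i, Fintype (β i)]
    (p : Ω → ℝ) (hp : ∀ ω, 0 ≤ p ω) (hps : ∑ ω, p ω = 1)
    (X : Fin (n+1) → Ω → ℝ) (hX : ∀ i ω, X i ω = 1 ∨ X i ω = -1)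
    (Y : (i : Fin n) → Ω → β i)
    (q : (i : Fin n) → β i → ℝ → ℝ)
    (hq0 : ∀ i y s, (s = 1 ∨ s = -1) → 0 ≤ q i y s)
    (hq1 : ∀ i s, (s = 1 ∨ s = -1) → ∑ y, q i y s = 1)
    (hjoint : ∀ x : Fin (n+1) → ℝ, (∀ i, x i = 1 ∨ x i = -1) →
      ∀ y : (i : Fin n) → β i,
      pr p (fun ω => (∀ i, X i ω = x i) ∧ ∀ i, Y i ω = y i)
        = (1/2)^(n+1) * ∏ i, q i (y i) (x i.castSucc * x i.succ)) :
    expec p (fun ω => (condExp p (fun ω' (i : Fin n) => Y i ω')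
        (fun ω' => X 0 ω' * X (Fin.last n) ω') ω)^2)
      = ∏ i, expec p (fun ω =>
          (condExp p (Y i) (fun ω' => X i.castSucc ω' * X i.succ ω') ω)^2) := by
  set aa : (i : Fin n) → β i → ℝ := fun i c => (q i c 1 + q i c (-1)) / 2 with haa
  set bb : (i : Fin n) → β i → ℝ := fun i c => (q i c 1 - q i c (-1)) / 2 with hbb
  have hXmem : ∀ ω, (fun i => X i ω) ∈ Fintype.piFinset (fun _ : Fin (n+1) => Stmt6Aux.signs) := by
    intro ω; rw [Fintype.mem_piFinset]; intro i; exact Stmt6Aux.mem_signs.2 (hX i ω)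
  -- the master formula
  have master : ∀ F : (Fin (n+1) → ℝ) → ((i : Fin n) → β i) → ℝ,
      expec p (fun ω => F (fun i => X i ω) (fun i => Y i ω))
        = ∑ x ∈ Fintype.piFinset (fun _ : Fin (n+1) => Stmt6Aux.signs),
            ∑ y : (i : Fin n) → β i,
              F x y * ((1/2)^(n+1) * ∏ i, q i (y i) (x i.castSucc * x i.succ)) := by
    intro F
    show (∑ ω, p ω * F (fun i => X i ω) (fun i => Y i ω)) = _
    rw [← Finset.sum_fiberwise_of_maps_to (fun ω (_ : ω ∈ Finset.univ) => hXmem ω)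
      (fun ω => p ω * F (fun i => X i ω) (fun i => Y i ω))]
    refine Finset.sum_congr rfl (fun x hx => ?_)
    have hxs : ∀ i, x i = 1 ∨ x i = -1 :=
      fun i => Stmt6Aux.mem_signs.1 (Fintype.mem_piFinset.1 hx i)
    rw [← Finset.sum_fiberwise (Finset.univ.filter fun ω => (fun i => X i ω) = x)
      (fun ω => (fun i => Y i ω)) (fun ω => p ω * F (fun i => X i ω) (fun i => Y i ω))]
    refine Finset.sum_congr rfl (fun y _ => ?_)
    rw [← hjoint x hxs y, Stmt6Aux.pr_eq_sum_filter, Finset.mul_sum]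
    refine Finset.sum_congr (by ext ω; simp [funext_iff]) (fun ω hω => ?_)
    rw [Finset.mem_filter] at hω
    rw [funext hω.2.1, funext hω.2.2]
    exact mul_comm _ _
  -- probability of a full observation y
  have hP : ∀ y : (i : Fin n) → β i,
      pr p (fun ω => (fun i => Y i ω) = y) = ∏ i, aa i (y i) := by
    intro y
    have h1 : pr p (fun ω => (fun i => Y i ω) = y)
        = ∑ x ∈ Fintype.piFinset (fun _ : Fin (n+1) => Stmt6Aux.signs),
            ∑ y' : (i : Fin n) → β i,
              (if y' = y then (1:ℝ) else 0)
                * ((1/2)^(n+1) * ∏ i, q i (y' i) (x i.castSucc * x i.succ)) := by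
      rw [Stmt6Aux.pr_eq_expec p (fun ω => (fun i => Y i ω) = y)]
      refine Eq.trans ?_ (master (fun _ y' => if y' = y then (1:ℝ) else 0))
      unfold expec
      exact Finset.sum_congr rfl (fun ω _ =>
        congrArg (fun t => p ω * t) (Stmt6Aux.ite_inst _ _ _ _))
    rw [h1]
    rw [Finset.sum_congr rfl (fun x (_ : x ∈ Fintype.piFinset
        (fun _ : Fin (n+1) => Stmt6Aux.signs)) => Stmt6Aux.sum_pick y
      (fun y' => (1/2)^(n+1) * ∏ i, q i (y' i) (x i.castSucc * x i.succ)) 1)]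
    rw [Finset.sum_congr rfl (fun x (_ : x ∈ Fintype.piFinset
        (fun _ : Fin (n+1) => Stmt6Aux.signs)) => one_mul _)]
    rw [Stmt6Aux.xbij (fun x => (1/2)^(n+1) * ∏ i, q i (y i) (x i.castSucc * x i.succ))]
    have h3 : ∀ s ∈ Stmt6Aux.signs, ∀ u ∈ Fintype.piFinset (fun _ : Fin n => Stmt6Aux.signs),
        ((1:ℝ)/2)^(n+1) * ∏ i, q i (y i)
            ((Stmt6Aux.build s u) i.castSucc * (Stmt6Aux.build s u) i.succ)
          = (1/2)^(n+1) * ∏ i, q i (y i) (u i) := by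
      intro s hs u hu
      congr 1
      refine Finset.prod_congr rfl (fun i _ => ?_)
      rw [Stmt6Aux.build_edge (Stmt6Aux.mem_signs.1 hs)
        (fun j => Stmt6Aux.mem_signs.1 (Fintype.mem_piFinset.1 hu j)) i]
    rw [Finset.sum_congr rfl (fun s hs => Finset.sum_congr rfl (fun u hu => h3 s hs u hu))]
    rw [Finset.sum_const, ← Finset.mul_sum,
      Finset.sum_prod_piFinset Stmt6Aux.signs (fun i a => q i (y i) a)]
    rw [Finset.prod_congr rfl (fun i (_ : i ∈ Finset.univ) =>
      Stmt6Aux.signs_sum (fun a => q i (y i) a))]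
    rw [Stmt6Aux.card_signs, Stmt6Aux.two_nsmul_eq]
    rw [Stmt6Aux.norm_prod n (fun i => q i (y i) 1 + q i (y i) (-1))]
  -- numerator for the full observation y
  have hN : ∀ y : (i : Fin n) → β i,
      expec p (fun ω => if (fun i => Y i ω) = y
          then X 0 ω * X (Fin.last n) ω else 0) = ∏ i, bb i (y i) := by
    intro y
    have h1 : expec p (fun ω => if (fun i => Y i ω) = y
          then X 0 ω * X (Fin.last n) ω else 0)
        = ∑ x ∈ Fintype.piFinset (fun _ : Fin (n+1) => Stmt6Aux.signs),
            ∑ y' : (i : Fin n) → β i,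
              (if y' = y then x 0 * x (Fin.last n) else 0)
                * ((1/2)^(n+1) * ∏ i, q i (y' i) (x i.castSucc * x i.succ)) := by
      exact master (fun x y' => if y' = y then x 0 * x (Fin.last n) else 0)
    rw [h1]
    rw [Finset.sum_congr rfl (fun x (_ : x ∈ Fintype.piFinset
        (fun _ : Fin (n+1) => Stmt6Aux.signs)) => Stmt6Aux.sum_pick y
      (fun y' => (1/2)^(n+1) * ∏ i, q i (y' i) (x i.castSucc * x i.succ))
      (x 0 * x (Fin.last n)))]
    rw [Stmt6Aux.xbij (fun x => (x 0 * x (Fin.last n))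
      * ((1/2)^(n+1) * ∏ i, q i (y i) (x i.castSucc * x i.succ)))]
    have h3 : ∀ s ∈ Stmt6Aux.signs, ∀ u ∈ Fintype.piFinset (fun _ : Fin n => Stmt6Aux.signs),
        ((Stmt6Aux.build s u) 0 * (Stmt6Aux.build s u) (Fin.last n))
          * (((1:ℝ)/2)^(n+1) * ∏ i, q i (y i)
            ((Stmt6Aux.build s u) i.castSucc * (Stmt6Aux.build s u) i.succ))
          = (1/2)^(n+1) * ∏ i, (u i * q i (y i) (u i)) := by
      intro s hs u hu
      have hs' := Stmt6Aux.mem_signs.1 hs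
      have hu' := fun j => Stmt6Aux.mem_signs.1 (Fintype.mem_piFinset.1 hu j)
      rw [Finset.prod_congr rfl (fun i (_ : i ∈ Finset.univ) => by
        rw [Stmt6Aux.build_edge hs' hu' i] :
        ∀ i ∈ Finset.univ, q i (y i) ((Stmt6Aux.build s u) i.castSucc
          * (Stmt6Aux.build s u) i.succ) = q i (y i) (u i))]
      rw [Stmt6Aux.build_zero, Stmt6Aux.build_last, Finset.prod_mul_distrib]
      have hsq : s * (s * ∏ i, u i) = ∏ i, u i := by
        rw [← mul_assoc, Stmt6Aux.signs_sq hs', one_mul]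
      rw [hsq]
      ring
    rw [Finset.sum_congr rfl (fun s hs => Finset.sum_congr rfl (fun u hu => h3 s hs u hu))]
    rw [Finset.sum_const, ← Finset.mul_sum,
      Finset.sum_prod_piFinset Stmt6Aux.signs (fun i a => a * q i (y i) a)]
    rw [Finset.prod_congr rfl (fun i (_ : i ∈ Finset.univ) =>
      Stmt6Aux.signs_sum (fun a => a * q i (y i) a))]
    rw [Stmt6Aux.card_signs, Stmt6Aux.two_nsmul_eq]
    rw [Stmt6Aux.norm_prod n (fun i => 1 * q i (y i) 1 + (-1) * q i (y i) (-1))]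
    refine Finset.prod_congr rfl (fun i _ => ?_)
    simp only [hbb]
    ring
  have haa1 : ∀ j, ∑ b, aa j b = 1 := by
    intro j
    have h : (∑ b, aa j b) = ((∑ b, q j b 1) + (∑ b, q j b (-1)))/2 := by
      rw [← Finset.sum_add_distrib, ← Finset.sum_div]
    rw [h, hq1 j 1 (Or.inl rfl), hq1 j (-1) (Or.inr rfl)]
    norm_num
  -- marginal probability of a single observation
  have hPi : ∀ (i0 : Fin n) (c : β i0), pr p (fun ω => Y i0 ω = c) = aa i0 c := by
    intro i0 c
    have h1 : pr p (fun ω => Y i0 ω = c)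
        = expec p (fun ω => (fun y : (i : Fin n) → β i => if y i0 = c then (1:ℝ) else 0)
            ((fun ω' (i : Fin n) => Y i ω') ω)) := by
      rw [Stmt6Aux.pr_eq_expec p (fun ω => Y i0 ω = c)]
    rw [h1, Stmt6Aux.fiber_expec p (fun ω' (i : Fin n) => Y i ω')
      (fun y : (i : Fin n) → β i => if y i0 = c then (1:ℝ) else 0)]
    rw [Finset.sum_congr rfl (fun y (_ : y ∈ Finset.univ) => by rw [hP y] :
      ∀ y ∈ Finset.univ, (if y i0 = c then (1:ℝ) else 0)
        * pr p (fun ω => (fun i => Y i ω) = y)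
        = (if y i0 = c then (1:ℝ) else 0) * ∏ i, aa i (y i))]
    exact Stmt6Aux.marg i0 aa (fun j _ => haa1 j) c
  -- marginal numerator for a single observation
  have hNi : ∀ (i0 : Fin n) (c : β i0),
      expec p (fun ω => if Y i0 ω = c then X i0.castSucc ω * X i0.succ ω else 0)
        = bb i0 c := by
    intro i0 c
    have h1 : expec p (fun ω => if Y i0 ω = c then X i0.castSucc ω * X i0.succ ω else 0)
        = ∑ x ∈ Fintype.piFinset (fun _ : Fin (n+1) => Stmt6Aux.signs),
            ∑ y : (i : Fin n) → β i,
              (if y i0 = c then x i0.castSucc * x i0.succ else 0)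
                * ((1/2)^(n+1) * ∏ i, q i (y i) (x i.castSucc * x i.succ)) := by
      exact master (fun x y => if y i0 = c then x i0.castSucc * x i0.succ else 0)
    rw [h1, Stmt6Aux.xbij (fun x => ∑ y : (i : Fin n) → β i,
      (if y i0 = c then x i0.castSucc * x i0.succ else 0)
        * ((1/2)^(n+1) * ∏ i, q i (y i) (x i.castSucc * x i.succ)))]
    have h3 : ∀ s ∈ Stmt6Aux.signs, ∀ u ∈ Fintype.piFinset (fun _ : Fin n => Stmt6Aux.signs),
        (∑ y : (i : Fin n) → β i,
          (if y i0 = c then (Stmt6Aux.build s u) i0.castSucc * (Stmt6Aux.build s u) i0.succ else 0)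
            * (((1:ℝ)/2)^(n+1) * ∏ i, q i (y i)
              ((Stmt6Aux.build s u) i.castSucc * (Stmt6Aux.build s u) i.succ)))
          = ((1/2)^(n+1)) * ((fun a => a * q i0 c a) (u i0)) := by
      intro s hs u hu
      have hs' := Stmt6Aux.mem_signs.1 hs
      have hu' := fun j => Stmt6Aux.mem_signs.1 (Fintype.mem_piFinset.1 hu j)
      have step : ∀ y : (i : Fin n) → β i,
          (if y i0 = c then (Stmt6Aux.build s u) i0.castSucc * (Stmt6Aux.build s u) i0.succ else 0)
            * (((1:ℝ)/2)^(n+1) * ∏ i, q i (y i)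
              ((Stmt6Aux.build s u) i.castSucc * (Stmt6Aux.build s u) i.succ))
          = ((1/2)^(n+1) * u i0) * ((if y i0 = c then (1:ℝ) else 0) * ∏ i, q i (y i) (u i)) := by
        intro y
        rw [Finset.prod_congr rfl (fun i (_ : i ∈ Finset.univ) => by
          rw [Stmt6Aux.build_edge hs' hu' i] :
          ∀ i ∈ Finset.univ, q i (y i) ((Stmt6Aux.build s u) i.castSucc
            * (Stmt6Aux.build s u) i.succ) = q i (y i) (u i))]
        rw [Stmt6Aux.build_edge hs' hu' i0]
        by_cases h : y i0 = c
        · rw [if_pos h, if_pos h]; ring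
        · rw [if_neg h, if_neg h]; ring
      rw [Finset.sum_congr rfl (fun y _ => step y), ← Finset.mul_sum]
      rw [Stmt6Aux.marg i0 (fun j b => q j b (u j)) (fun j _ => hq1 j (u j) (hu' j)) c]
      ring
    rw [Finset.sum_congr rfl (fun s hs => Finset.sum_congr rfl (fun u hu => h3 s hs u hu))]
    rw [Finset.sum_const, ← Finset.mul_sum]
    rw [Stmt6Aux.sum_proj i0 (fun a => a * q i0 c a)]
    rw [Stmt6Aux.card_signs, Stmt6Aux.two_nsmul_eq]
    rw [Stmt6Aux.norm_single n hn (1 * q i0 c 1 + (-1) * q i0 c (-1))]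
    simp only [hbb]
    ring
  -- assembling the left-hand side
  have hLHS : expec p (fun ω => (condExp p (fun ω' (i : Fin n) => Y i ω')
        (fun ω' => X 0 ω' * X (Fin.last n) ω') ω)^2)
      = ∑ y : (i : Fin n) → β i,
          (((∏ i, bb i (y i)) / (∏ i, aa i (y i)))^2) * (∏ i, aa i (y i)) := by
    have hL1 : (fun ω => (condExp p (fun ω' (i : Fin n) => Y i ω')
          (fun ω' => X 0 ω' * X (Fin.last n) ω') ω)^2)
        = (fun ω => (fun y : (i : Fin n) → β i =>
            (expec p (fun ω' => if (fun i => Y i ω') = y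
                then X 0 ω' * X (Fin.last n) ω' else 0)
              / pr p (fun ω' => (fun i => Y i ω') = y))^2)
            ((fun ω' (i : Fin n) => Y i ω') ω)) := by
      funext ω
      simp only [condExp]
    rw [hL1, Stmt6Aux.fiber_expec p (fun ω' (i : Fin n) => Y i ω')
      (fun y : (i : Fin n) → β i =>
        (expec p (fun ω' => if (fun i => Y i ω') = y
            then X 0 ω' * X (Fin.last n) ω' else 0)
          / pr p (fun ω' => (fun i => Y i ω') = y))^2)]
    refine Finset.sum_congr rfl (fun y _ => ?_)
    rw [hN y, hP y]
  -- assembling each right-hand side factor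
  have hRHSi : ∀ i0 : Fin n, expec p (fun ω =>
        (condExp p (Y i0) (fun ω' => X i0.castSucc ω' * X i0.succ ω') ω)^2)
      = ∑ c : β i0, ((bb i0 c / aa i0 c)^2) * aa i0 c := by
    intro i0
    have hR1 : (fun ω => (condExp p (Y i0)
          (fun ω' => X i0.castSucc ω' * X i0.succ ω') ω)^2)
        = (fun ω => (fun c : β i0 =>
            (expec p (fun ω' => if Y i0 ω' = c
                then X i0.castSucc ω' * X i0.succ ω' else 0)
              / pr p (fun ω' => Y i0 ω' = c))^2)
            (Y i0 ω)) := by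
      funext ω
      simp only [condExp]
    rw [hR1, Stmt6Aux.fiber_expec p (Y i0) (fun c : β i0 =>
      (expec p (fun ω' => if Y i0 ω' = c
          then X i0.castSucc ω' * X i0.succ ω' else 0)
        / pr p (fun ω' => Y i0 ω' = c))^2)]
    refine Finset.sum_congr rfl (fun c _ => ?_)
    rw [hNi i0 c, hPi i0 c]
  rw [hLHS, Finset.prod_congr rfl (fun i0 (_ : i0 ∈ Finset.univ) => hRHSi i0)]
  have h0 : ∀ (i : Fin n) (c : β i), aa i c = 0 → bb i c = 0 := by
    intro i c h
    have h1 := hq0 i c 1 (Or.inl rfl)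
    have h2 := hq0 i c (-1) (Or.inr rfl)
    simp only [haa] at h
    simp only [hbb]
    have hq1' : q i c 1 = 0 := by nlinarith
    have hq2' : q i c (-1) = 0 := by nlinarith
    rw [hq1', hq2']
    norm_num
  rw [Finset.prod_univ_sum (fun _ => Finset.univ)
    (fun (i : Fin n) (c : β i) => ((bb i c / aa i c)^2) * aa i c)]
  rw [Fintype.piFinset_univ]
  refine Finset.sum_congr rfl (fun y _ => ?_)
  exact Stmt6Aux.keyalg (fun i => aa i (y i)) (fun i => bb i (y i)) (fun i => h0 i (y i))

end
end

section
/- Let a, b, c, d ≥ 0 with a + b + c + d = 1, a + c > 0 and b + d > 0. For t ∈ [0,1] define G(t) := ((a−c)(1−t) + (b−d)(1+t))² / (2((a+c)(1−t) + (b+d)(1+t))) + ((a−c)(1+t) + (b−d)(1−t))² / (2((a+c)(1+t) + (b+d)(1−t))). Then the map t ↦ (G(t) − G(0))/t² is non-decreasing on (0,1], and consequently G(t) ≤ (1−t²)·G(0) + t²·G(1) for all t ∈ [0,1]. -/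
/-- the interpolation step in the proof of the information-percolation
bound. For `a, b, c, d ≥ 0` with `a + b + c + d = 1`, `a + c > 0` and `b + d > 0`, and
`G(t)` as below, the map `t ↦ (G(t) − G(0))/t²` is non-decreasing on `(0,1]`, and consequently
`G(t) ≤ (1−t²)·G(0) + t²·G(1)` for all `t ∈ [0,1]`. -/
theorem stmt13 (a b c d : ℝ) (ha : 0 ≤ a) (hb : 0 ≤ b) (hc : 0 ≤ c) (hd : 0 ≤ d)
    (hsum : a + b + c + d = 1) (hac : 0 < a + c) (hbd : 0 < b + d) :
    let G : ℝ → ℝ := fun t =>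
      ((a - c) * (1 - t) + (b - d) * (1 + t))^2 /
        (2 * ((a + c) * (1 - t) + (b + d) * (1 + t))) +
      ((a - c) * (1 + t) + (b - d) * (1 - t))^2 /
        (2 * ((a + c) * (1 + t) + (b + d) * (1 - t)))
    MonotoneOn (fun t => (G t - G 0) / t^2) (Set.Ioc (0 : ℝ) 1) ∧
    ∀ t ∈ Set.Icc (0 : ℝ) 1, G t ≤ (1 - t^2) * G 0 + t^2 * G 1 := by
  intro G
  have hd' : d = 1 - a - b - c := by linarith
  subst hd'
  set K : ℝ := 1 - 2*(a+c) with hK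
  set P : ℝ := 2*(a+b) - 1 with hP
  set C : ℝ := ((2*(b+c) - 1) - P * K)^2 with hC
  have hC0 : 0 ≤ C := sq_nonneg _
  have hKlt : K < 1 := by rw [hK]; linarith
  have hKgt : -1 < K := by rw [hK]; linarith
  have h1pos : ∀ t ∈ Set.Icc (0:ℝ) 1, 0 < 1 + K*t := by
    intro t ht
    obtain ⟨h0, h1⟩ := ht
    rcases le_or_gt K 0 with h | h
    · nlinarith
    · nlinarith
  have h2pos : ∀ t ∈ Set.Icc (0:ℝ) 1, 0 < 1 - K*t := by
    intro t ht
    obtain ⟨h0, h1⟩ := ht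
    rcases le_or_gt K 0 with h | h
    · nlinarith
    · nlinarith
  have hpos : ∀ t ∈ Set.Icc (0:ℝ) 1, 0 < 1 - K^2*t^2 := by
    intro t ht
    have := mul_pos (h1pos t ht) (h2pos t ht)
    nlinarith
  have hG : ∀ t ∈ Set.Icc (0:ℝ) 1, G t = P^2 + t^2 * C / (1 - K^2*t^2) := by
    intro t ht
    have e1 : (a + c) * (1 - t) + (b + (1 - a - b - c)) * (1 + t) = 1 + K*t := by
      rw [hK]; ring
    have e2 : (a + c) * (1 + t) + (b + (1 - a - b - c)) * (1 - t) = 1 - K*t := by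
      rw [hK]; ring
    have n1 : (a + c) * (1 - t) + (b + (1 - a - b - c)) * (1 + t) ≠ 0 := by
      rw [e1]; exact ne_of_gt (h1pos t ht)
    have n2 : (a + c) * (1 + t) + (b + (1 - a - b - c)) * (1 - t) ≠ 0 := by
      rw [e2]; exact ne_of_gt (h2pos t ht)
    have n3 : 1 - K^2*t^2 ≠ 0 := ne_of_gt (hpos t ht)
    have h1 := h1pos t ht
    have h2 := h2pos t ht
    simp only [G]
    rw [e1, e2, div_add_div _ _ (by positivity) (by positivity), div_eq_iff (by positivity)]
    rw [add_div' _ _ _ n3, div_mul_eq_mul_div, eq_div_iff n3]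
    simp only [hC, hP, hK]
    ring
  have h01 : (0:ℝ) ∈ Set.Icc (0:ℝ) 1 := by norm_num
  have h11 : (1:ℝ) ∈ Set.Icc (0:ℝ) 1 := by norm_num
  have key : ∀ t ∈ Set.Ioc (0:ℝ) 1, (G t - G 0) / t^2 = C / (1 - K^2*t^2) := by
    intro t ht
    have ht' : t ∈ Set.Icc (0:ℝ) 1 := ⟨ht.1.le, ht.2⟩
    have hD := hpos t ht'
    have htne : t ≠ 0 := ne_of_gt ht.1
    rw [hG t ht', hG 0 h01]
    field_simp
    ring
  constructor
  · intro x hx y hy hxy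
    have hx' : x ∈ Set.Icc (0:ℝ) 1 := ⟨hx.1.le, hx.2⟩
    have hy' : y ∈ Set.Icc (0:ℝ) 1 := ⟨hy.1.le, hy.2⟩
    have hDx := hpos x hx'
    have hDy := hpos y hy'
    show (G x - G 0) / x^2 ≤ (G y - G 0) / y^2
    rw [key x hx, key y hy, div_le_div_iff₀ hDx hDy]
    nlinarith [mul_nonneg (mul_nonneg hC0 (sq_nonneg K)) (show (0:ℝ) ≤ y^2 - x^2 by nlinarith [hx.1])]
  · intro t ht
    have hDt := hpos t ht
    have hD1 : 0 < 1 - K^2 := by have := hpos 1 h11; nlinarith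
    rw [hG t ht, hG 0 h01, hG 1 h11]
    have h3 : t^2 * C / (1 - K^2*t^2) ≤ t^2 * C / (1 - K^2) := by
      rw [div_le_div_iff₀ hDt hD1]
      have ht2 : t^2 ≤ 1 := by nlinarith [ht.1, ht.2]
      nlinarith [mul_nonneg (mul_nonneg (sq_nonneg t) hC0) (mul_nonneg (sq_nonneg K) (sub_nonneg.mpr ht2))]
    have hr : (1 - t^2) * (P^2 + 0^2 * C / (1 - K^2*0^2)) + t^2 * (P^2 + 1^2 * C / (1 - K^2*1^2))
        = P^2 + t^2 * C / (1 - K^2) := by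
      field_simp
      ring
    rw [hr]
    linarith [h3]
end
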